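/- arXiv:1509.07734 — 11 statements merged into one kernel-verified Lean document; each statement's English description precedes it below -/
import Mathlib

section
/- Let A'', A', A, B', B be submodules of M with A'' ≤ A' ≤ A and B' ≤ B. Then the inclusion A'⊓B ≤ A⊓B induces a K-linear map φ from (A'⊓B)⧸((A''⊓B)⊔(A'⊓B')) to (A⊓B)⧸((A''⊓B)⊔(A⊓B')), and the identity of A⊓B induces a K-linear map ψ from (A⊓B)⧸((A''⊓B)⊔(A⊓B')) to (A⊓B)⧸((A'⊓B)⊔(A⊓B')); moreover φ is injective, ψ is surjective, and the range of φ equals the kernel of ψ (i.e. the sequence 0 → (A'⊓B)⧸((A''⊓B)⊔(A'⊓B')) → (A⊓B)⧸((A''⊓B)⊔(A⊓B')) → (A⊓B)⧸((A'⊓B)⊔(A⊓B')) → 0 is short exact). -/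
/-- Observation 3.5 item 1: the box short exact sequence for a vertical subdivision.
For submodules `A'' ≤ A' ≤ A` and `B' ≤ B` of a `K`-vector space `M`, the inclusion
`A' ⊓ B ≤ A ⊓ B` induces an injective map
`φ : (A'⊓B)⧸((A''⊓B)⊔(A'⊓B')) → (A⊓B)⧸((A''⊓B)⊔(A⊓B'))`, the identity of `A ⊓ B`
induces a surjective map `ψ : (A⊓B)⧸((A''⊓B)⊔(A⊓B')) → (A⊓B)⧸((A'⊓B)⊔(A⊓B'))`,
and `range φ = ker ψ`. -/
theorem stmt0 (K : Type*) [Field K] (M : Type*) [AddCommGroup M] [Module K M]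
    (A'' A' A B' B : Submodule K M) (hA'' : A'' ≤ A') (hA' : A' ≤ A) (hB : B' ≤ B) :
    ∃ (φ : (↥(A' ⊓ B) ⧸ (A'' ⊓ B ⊔ A' ⊓ B').comap (A' ⊓ B).subtype) →ₗ[K]
        (↥(A ⊓ B) ⧸ (A'' ⊓ B ⊔ A ⊓ B').comap (A ⊓ B).subtype))
      (ψ : (↥(A ⊓ B) ⧸ (A'' ⊓ B ⊔ A ⊓ B').comap (A ⊓ B).subtype) →ₗ[K]
        (↥(A ⊓ B) ⧸ (A' ⊓ B ⊔ A ⊓ B').comap (A ⊓ B).subtype)),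
      (∀ x : ↥(A' ⊓ B),
        φ (Submodule.Quotient.mk x) =
          Submodule.Quotient.mk (Submodule.inclusion (inf_le_inf hA' le_rfl) x)) ∧
      (∀ x : ↥(A ⊓ B),
        ψ (Submodule.Quotient.mk x) = Submodule.Quotient.mk x) ∧
      Function.Injective φ ∧ Function.Surjective ψ ∧
      LinearMap.range φ = LinearMap.ker ψ := by
  have hP : A' ⊓ B ≤ A ⊓ B := inf_le_inf hA' le_rfl
  have hcφ : (A'' ⊓ B ⊔ A' ⊓ B').comap (A' ⊓ B).subtype ≤
      ((A'' ⊓ B ⊔ A ⊓ B').comap (A ⊓ B).subtype).comap (Submodule.inclusion hP) := by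
    intro x hx
    simp only [Submodule.mem_comap, Submodule.coe_subtype, Submodule.coe_inclusion] at *
    exact sup_le_sup le_rfl (inf_le_inf hA' le_rfl) hx
  have hcψ : (A'' ⊓ B ⊔ A ⊓ B').comap (A ⊓ B).subtype ≤
      ((A' ⊓ B ⊔ A ⊓ B').comap (A ⊓ B).subtype).comap (LinearMap.id (R := K)) := by
    intro x hx
    simp only [Submodule.mem_comap, LinearMap.id_coe, id_eq] at *
    exact sup_le_sup (inf_le_inf hA'' le_rfl) le_rfl hx
  refine ⟨Submodule.mapQ _ _ (Submodule.inclusion hP) hcφ,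
    Submodule.mapQ _ _ LinearMap.id hcψ, fun x => rfl, fun x => rfl, ?_, ?_, ?_⟩
  · -- injectivity
    rw [← LinearMap.ker_eq_bot, eq_bot_iff]
    intro a ha
    obtain ⟨x, rfl⟩ := Submodule.Quotient.mk_surjective _ a
    rw [LinearMap.mem_ker, Submodule.mapQ_apply, Submodule.Quotient.mk_eq_zero] at ha
    rw [Submodule.mem_bot, Submodule.Quotient.mk_eq_zero]
    simp only [Submodule.mem_comap, Submodule.coe_subtype, Submodule.coe_inclusion] at *
    obtain ⟨u, hu, v, hv, huv⟩ := Submodule.mem_sup.mp ha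
    have hx' : (x : M) ∈ A' := x.2.1
    have hvA' : v ∈ A' ⊓ B' := by
      refine ⟨?_, hv.2⟩
      have : v = (x : M) - u := by rw [← huv]; abel
      rw [this]
      exact Submodule.sub_mem _ hx' (hA'' hu.1)
    exact Submodule.mem_sup.mpr ⟨u, hu, v, hvA', huv⟩
  · -- surjectivity
    intro a
    obtain ⟨x, rfl⟩ := Submodule.Quotient.mk_surjective _ a
    exact ⟨Submodule.Quotient.mk x, rfl⟩
  · -- range = ker
    ext a
    obtain ⟨y, rfl⟩ := Submodule.Quotient.mk_surjective _ a
    simp only [LinearMap.mem_range, LinearMap.mem_ker]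
    constructor
    · rintro ⟨b, hb⟩
      obtain ⟨x, rfl⟩ := Submodule.Quotient.mk_surjective _ b
      rw [← hb, Submodule.mapQ_apply, Submodule.mapQ_apply, Submodule.Quotient.mk_eq_zero]
      simp only [Submodule.mem_comap, Submodule.coe_subtype, LinearMap.id_coe, id_eq,
        Submodule.coe_inclusion]
      exact Submodule.mem_sup_left x.2
    · intro h
      rw [Submodule.mapQ_apply, Submodule.Quotient.mk_eq_zero] at h
      simp only [Submodule.mem_comap, Submodule.coe_subtype, LinearMap.id_coe, id_eq] at h
      obtain ⟨p, hp, q, hq, hpq⟩ := Submodule.mem_sup.mp h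
      refine ⟨Submodule.Quotient.mk ⟨p, hp⟩, ?_⟩
      rw [Submodule.mapQ_apply]
      rw [Submodule.Quotient.eq]
      simp only [Submodule.mem_comap, Submodule.coe_subtype]
      have : ((Submodule.inclusion hP ⟨p, hp⟩ - y : ↥(A ⊓ B)) : M) = -q := by
        push_cast [Submodule.coe_inclusion]
        rw [← hpq]; abel
      rw [this]
      exact Submodule.neg_mem _ (Submodule.mem_sup_right hq)
end

section
/- Let A', A, B'', B', B be submodules of M with A' ≤ A and B'' ≤ B' ≤ B. Then the inclusion A⊓B' ≤ A⊓B induces a K-linear map φ from (A⊓B')⧸((A'⊓B')⊔(A⊓B'')) to (A⊓B)⧸((A'⊓B)⊔(A⊓B'')), and the identity of A⊓B induces a K-linear map ψ from (A⊓B)⧸((A'⊓B)⊔(A⊓B'')) to (A⊓B)⧸((A'⊓B)⊔(A⊓B')); moreover φ is injective, ψ is surjective, and the range of φ equals the kernel of ψ (short exactness). -/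
/-- Observation 3.5 item 2: the box short exact sequence for a horizontal subdivision.
For submodules `A' ≤ A` and `B'' ≤ B' ≤ B` of a `K`-vector space `M`, the inclusion
`A ⊓ B' ≤ A ⊓ B` induces an injective map
`φ : (A⊓B')⧸((A'⊓B')⊔(A⊓B'')) → (A⊓B)⧸((A'⊓B)⊔(A⊓B''))`, the identity of `A ⊓ B`
induces a surjective map `ψ : (A⊓B)⧸((A'⊓B)⊔(A⊓B'')) → (A⊓B)⧸((A'⊓B)⊔(A⊓B'))`,
and `range φ = ker ψ`. -/
theorem stmt1 (K : Type*) [Field K] (M : Type*) [AddCommGroup M] [Module K M]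
    (A' A B'' B' B : Submodule K M) (hA : A' ≤ A) (hB'' : B'' ≤ B') (hB' : B' ≤ B) :
    ∃ (φ : (↥(A ⊓ B') ⧸ (A' ⊓ B' ⊔ A ⊓ B'').comap (A ⊓ B').subtype) →ₗ[K]
        (↥(A ⊓ B) ⧸ (A' ⊓ B ⊔ A ⊓ B'').comap (A ⊓ B).subtype))
      (ψ : (↥(A ⊓ B) ⧸ (A' ⊓ B ⊔ A ⊓ B'').comap (A ⊓ B).subtype) →ₗ[K]
        (↥(A ⊓ B) ⧸ (A' ⊓ B ⊔ A ⊓ B').comap (A ⊓ B).subtype)),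
      (∀ x : ↥(A ⊓ B'),
        φ (Submodule.Quotient.mk x) =
          Submodule.Quotient.mk (Submodule.inclusion (inf_le_inf le_rfl hB') x)) ∧
      (∀ x : ↥(A ⊓ B),
        ψ (Submodule.Quotient.mk x) = Submodule.Quotient.mk x) ∧
      Function.Injective φ ∧ Function.Surjective ψ ∧
      LinearMap.range φ = LinearMap.ker ψ := by
  set p := (A' ⊓ B' ⊔ A ⊓ B'').comap (A ⊓ B').subtype with hp
  set q := (A' ⊓ B ⊔ A ⊓ B'').comap (A ⊓ B).subtype with hq
  set r := (A' ⊓ B ⊔ A ⊓ B').comap (A ⊓ B).subtype with hr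
  have hincl : A ⊓ B' ≤ A ⊓ B := inf_le_inf le_rfl hB'
  have hpq : p ≤ q.comap (Submodule.inclusion hincl) := by
    intro x hx
    simp only [hp, Submodule.mem_comap, Submodule.subtype_apply] at hx
    simp only [hq, Submodule.mem_comap, Submodule.subtype_apply, Submodule.inclusion_apply]
    exact sup_le_sup (inf_le_inf le_rfl hB') le_rfl hx
  have hqr : q ≤ r.comap LinearMap.id := by
    intro x hx
    simp only [hq, Submodule.mem_comap, Submodule.subtype_apply] at hx
    simp only [hr, Submodule.mem_comap, LinearMap.id_coe, id_eq, Submodule.subtype_apply]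
    exact sup_le_sup le_rfl (inf_le_inf le_rfl hB'') hx
  refine ⟨Submodule.mapQ p q (Submodule.inclusion hincl) hpq,
    Submodule.mapQ q r LinearMap.id hqr,
    fun x => by rw [Submodule.mapQ_apply],
    fun x => by rw [Submodule.mapQ_apply]; rfl, ?_, ?_, ?_⟩
  · -- injective
    rw [← LinearMap.ker_eq_bot, eq_bot_iff]
    intro z hz
    obtain ⟨y, rfl⟩ := Submodule.Quotient.mk_surjective p z
    rw [LinearMap.mem_ker, Submodule.mapQ_apply, Submodule.Quotient.mk_eq_zero] at hz
    rw [Submodule.mem_bot, Submodule.Quotient.mk_eq_zero]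
    simp only [hq, Submodule.mem_comap, Submodule.subtype_apply,
      Submodule.inclusion_apply] at hz
    obtain ⟨a, ha, c, hc, hac⟩ := Submodule.mem_sup.mp hz
    have hyB' : (y : M) ∈ B' := y.2.2
    have haB' : a ∈ B' := by
      have : a = (y : M) - c := by rw [← hac]; abel
      rw [this]
      exact B'.sub_mem hyB' (hB'' hc.2)
    simp only [hp, Submodule.mem_comap, Submodule.subtype_apply]
    exact Submodule.mem_sup.mpr ⟨a, ⟨ha.1, haB'⟩, c, hc, hac⟩
  · -- surjective
    intro z
    obtain ⟨y, rfl⟩ := Submodule.Quotient.mk_surjective r z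
    exact ⟨Submodule.Quotient.mk y, by rw [Submodule.mapQ_apply]; rfl⟩
  · -- exactness
    ext z
    obtain ⟨y, rfl⟩ := Submodule.Quotient.mk_surjective q z
    rw [LinearMap.mem_ker, Submodule.mapQ_apply, Submodule.Quotient.mk_eq_zero]
    simp only [hr, Submodule.mem_comap, LinearMap.id_coe, id_eq, Submodule.subtype_apply]
    constructor
    · rintro ⟨w, hw⟩
      obtain ⟨x, rfl⟩ := Submodule.Quotient.mk_surjective p w
      rw [Submodule.mapQ_apply, Submodule.Quotient.eq] at hw
      simp only [hq, Submodule.mem_comap, Submodule.subtype_apply] at hw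
      have hsub : ((Submodule.inclusion hincl x : ↥(A ⊓ B)) : M) - (y : M)
          ∈ A' ⊓ B ⊔ A ⊓ B' := sup_le_sup le_rfl (inf_le_inf le_rfl hB'') hw
      have hx : ((x : M)) ∈ A' ⊓ B ⊔ A ⊓ B' :=
        Submodule.mem_sup_right x.2
      have : (y : M) = (x : M) - ((x : M) - (y : M)) := by abel
      rw [this]
      exact Submodule.sub_mem _ hx hsub
    · intro hy
      obtain ⟨a, ha, c, hc, hac⟩ := Submodule.mem_sup.mp hy
      refine ⟨Submodule.Quotient.mk (⟨c, hc⟩ : ↥(A ⊓ B')), ?_⟩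
      rw [Submodule.mapQ_apply, Submodule.Quotient.eq]
      simp only [hq, Submodule.mem_comap, Submodule.subtype_apply]
      have hcy : ((Submodule.inclusion hincl ⟨c, hc⟩ - y : ↥(A ⊓ B)) : M) = -a := by
        simp only [AddSubgroupClass.coe_sub, Submodule.inclusion_apply, ← hac]
        abel
      rw [hcy]
      exact Submodule.mem_sup_left (Submodule.neg_mem _ ha)
end

section
/- Let A₀ ≤ A₁ ≤ A₂ and B₀ ≤ B₁ ≤ B₂ be submodules of M. Then (A₁⊓B₁) ⊓ ((A₀⊓B₂) ⊔ (A₂⊓B₀)) = (A₀⊓B₁) ⊔ (A₁⊓B₀). Consequently the inclusion A₁⊓B₁ ≤ A₂⊓B₂ induces an injective K-linear map from (A₁⊓B₁)⧸((A₀⊓B₁)⊔(A₁⊓B₀)) to (A₂⊓B₂)⧸((A₀⊓B₂)⊔(A₂⊓B₀)). -/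
/-- The corner intersection identity underlying Observation 3.5 item 3 /
Observation 3.6 item 1: for submodules `A₀ ≤ A₁ ≤ A₂` and `B₀ ≤ B₁ ≤ B₂` of a
`K`-vector space `M`, one has
`(A₁⊓B₁) ⊓ ((A₀⊓B₂) ⊔ (A₂⊓B₀)) = (A₀⊓B₁) ⊔ (A₁⊓B₀)`, and consequently the
inclusion `A₁ ⊓ B₁ ≤ A₂ ⊓ B₂` induces an injective linear map
`(A₁⊓B₁)⧸((A₀⊓B₁)⊔(A₁⊓B₀)) → (A₂⊓B₂)⧸((A₀⊓B₂)⊔(A₂⊓B₀))`. -/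
theorem stmt2 (K : Type*) [Field K] (M : Type*) [AddCommGroup M] [Module K M]
    (A₀ A₁ A₂ B₀ B₁ B₂ : Submodule K M)
    (hA₀ : A₀ ≤ A₁) (hA₁ : A₁ ≤ A₂) (hB₀ : B₀ ≤ B₁) (hB₁ : B₁ ≤ B₂) :
    (A₁ ⊓ B₁) ⊓ ((A₀ ⊓ B₂) ⊔ (A₂ ⊓ B₀)) = (A₀ ⊓ B₁) ⊔ (A₁ ⊓ B₀) ∧
    ∃ φ : (↥(A₁ ⊓ B₁) ⧸ (A₀ ⊓ B₁ ⊔ A₁ ⊓ B₀).comap (A₁ ⊓ B₁).subtype) →ₗ[K]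
        (↥(A₂ ⊓ B₂) ⧸ (A₀ ⊓ B₂ ⊔ A₂ ⊓ B₀).comap (A₂ ⊓ B₂).subtype),
      (∀ x : ↥(A₁ ⊓ B₁),
        φ (Submodule.Quotient.mk x) =
          Submodule.Quotient.mk (Submodule.inclusion (inf_le_inf hA₁ hB₁) x)) ∧
      Function.Injective φ := by
  have key : (A₁ ⊓ B₁) ⊓ ((A₀ ⊓ B₂) ⊔ (A₂ ⊓ B₀)) = (A₀ ⊓ B₁) ⊔ (A₁ ⊓ B₀) := by
    apply le_antisymm
    · rintro x ⟨⟨hx1, hx2⟩, h⟩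
      obtain ⟨a, ⟨ha0, _⟩, c, ⟨_, hc0⟩, rfl⟩ := Submodule.mem_sup.1 h
      refine Submodule.mem_sup.2 ⟨a, ⟨ha0, ?_⟩, c, ⟨?_, hc0⟩, rfl⟩
      · have : a = (a + c) - c := by abel
        rw [this]
        exact Submodule.sub_mem _ hx2 (hB₀ hc0)
      · have : c = (a + c) - a := by abel
        rw [this]
        exact Submodule.sub_mem _ hx1 (hA₀ ha0)
    · apply le_inf
      · exact sup_le (inf_le_inf hA₀ le_rfl) (inf_le_inf le_rfl hB₀)
      · exact sup_le (le_sup_left.trans' (inf_le_inf le_rfl hB₁))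
          (le_sup_right.trans' (inf_le_inf hA₁ le_rfl))
  refine ⟨key, ?_⟩
  set ι := Submodule.inclusion (inf_le_inf hA₁ hB₁ : A₁ ⊓ B₁ ≤ A₂ ⊓ B₂)
  have hle : (A₀ ⊓ B₁ ⊔ A₁ ⊓ B₀).comap (A₁ ⊓ B₁).subtype ≤
      ((A₀ ⊓ B₂ ⊔ A₂ ⊓ B₀).comap (A₂ ⊓ B₂).subtype).comap ι := by
    intro x hx
    simp only [Submodule.mem_comap] at hx ⊢
    exact sup_le_sup (inf_le_inf le_rfl hB₁) (inf_le_inf hA₁ le_rfl) hx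
  refine ⟨Submodule.mapQ _ _ ι hle, fun x => Submodule.mapQ_apply _ _ _ x, ?_⟩
  rw [← LinearMap.ker_eq_bot, Submodule.eq_bot_iff]
  intro q hq
  obtain ⟨x, rfl⟩ := Submodule.Quotient.mk_surjective _ q
  rw [LinearMap.mem_ker, Submodule.mapQ_apply, Submodule.Quotient.mk_eq_zero] at hq
  rw [Submodule.Quotient.mk_eq_zero]
  simp only [Submodule.mem_comap] at hq ⊢
  have : (x : M) ∈ (A₁ ⊓ B₁) ⊓ ((A₀ ⊓ B₂) ⊔ (A₂ ⊓ B₀)) := ⟨x.2, hq⟩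
  rw [key] at this
  exact this
end

section
/- Let I : ℝ → Submodule K M be an antitone family of K-submodules of M (b ≤ b' implies I b' ≤ I b) such that: (i) for every b ∈ ℝ, the image of I b under multiplication by t equals I (b + 2π); and (ii) ⨆_{b ∈ ℝ} I b = ⊤ (every element of M lies in some I b). Then every torsion element of the R-module M lies in I b for every b; that is, the torsion submodule Module.torsion R M is contained in ⨅_{b ∈ ℝ} I b. -/
open LaurentPolynomial in
/-- Multiplication by `t = T 1` on a module over the Laurent polynomial ring
`K[t,t⁻¹]`, viewed as a `K`-linear endomorphism. -/
noncomputable def tMul (K : Type*) [Field K] (M : Type*) [AddCommGroup M]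
    [Module K M] [Module (LaurentPolynomial K) M]
    [IsScalarTower K (LaurentPolynomial K) M] : M →ₗ[K] M :=
  (LinearMap.lsmul (LaurentPolynomial K) M (T 1)).restrictScalars K

open LaurentPolynomial in
/-- One inclusion of Proposition 3.2 item 2 of the paper: `T(H_r(X̃)) ⊆ 𝕀^∞(r)`.
If `I : ℝ → Submodule K M` is an antitone family of `K`-submodules of an
`R = K[t,t⁻¹]`-module `M` such that `t • (I b) = I (b + 2π)` for all `b` and
`⨆ b, I b = ⊤`, then every `R`-torsion element of `M` lies in every `I b`, i.e.
the torsion submodule is contained in `⨅ b, I b`. -/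
theorem stmt5 (K : Type*) [Field K] (M : Type*) [AddCommGroup M]
    [Module K M] [Module (LaurentPolynomial K) M]
    [IsScalarTower K (LaurentPolynomial K) M]
    (I : ℝ → Submodule K M) (hI : Antitone I)
    (ht : ∀ b : ℝ, (I b).map (tMul K M) = I (b + 2 * Real.pi))
    (hsup : ⨆ b : ℝ, I b = ⊤) :
    ∀ x : M, x ∈ Submodule.torsion (LaurentPolynomial K) M → x ∈ ⨅ b : ℝ, I b := by
  have pi_pos := Real.pi_pos
  -- Lemma B : smul by `T n`, `n ≥ 1`, moves `I b` into `I (b + 2π)`.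
  have hT : ∀ n : ℤ, 1 ≤ n → ∀ (b : ℝ) (y : M), y ∈ I b → (T n : LaurentPolynomial K) • y ∈ I (b + 2 * Real.pi) := by
    refine fun n hn => Int.le_induction (motive := fun n _ => ∀ (b : ℝ) (y : M), y ∈ I b → (T n : LaurentPolynomial K) • y ∈ I (b + 2 * Real.pi)) ?_ ?_ n hn
    · intro b y hy
      have : tMul K M y ∈ (I b).map (tMul K M) := Submodule.mem_map_of_mem hy
      rw [ht b] at this
      exact this
    · intro n hn ihn b y hy
      have h1 : (T (n + 1) : LaurentPolynomial K) • y = (T 1 : LaurentPolynomial K) • ((T n : LaurentPolynomial K) • y) := by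
        rw [add_comm n 1, T_add, mul_smul]
      have h2 : (T 1 : LaurentPolynomial K) • ((T n : LaurentPolynomial K) • y) ∈ I (b + 2 * Real.pi + 2 * Real.pi) := by
        have : tMul K M (T n • y) ∈ (I (b + 2 * Real.pi)).map (tMul K M) :=
          Submodule.mem_map_of_mem (ihn b y hy)
        rw [ht (b + 2 * Real.pi)] at this
        exact this
      rw [h1]
      exact hI (by linarith) h2
  intro x hx
  obtain ⟨p, hp⟩ := hx
  have hp0 : (p : LaurentPolynomial K) ≠ 0 := nonZeroDivisors.coe_ne_zero p
  have hp' : (p : LaurentPolynomial K) • x = 0 := hp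
  set pl : LaurentPolynomial K := (p : LaurentPolynomial K) with hpl
  have hsuppne : pl.coeff.support.Nonempty := Finsupp.support_nonempty_iff.2 (mt AddMonoidAlgebra.coeff_eq_zero.1 hp0)
  set m : ℤ := pl.coeff.support.min' hsuppne with hm
  have hma : pl.coeff m ≠ 0 := Finsupp.mem_support_iff.1 (pl.coeff.support.min'_mem hsuppne)
  set a : K := pl.coeff m with ha
  set q : LaurentPolynomial K := C a⁻¹ * T (-m) * pl with hq
  have hqx : q • x = 0 := by
    rw [hq, mul_smul, hp', smul_zero]
  have hqcoeff : ∀ n : ℤ, q.coeff n = a⁻¹ * pl.coeff (m + n) := by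
    intro n
    rw [hq, ← single_eq_C_mul_T]
    have := AddMonoidAlgebra.coeff_single_mul_apply pl a⁻¹ (-m) n
    simpa using this
  have hq0 : q.coeff 0 = 1 := by
    rw [hqcoeff 0, add_zero, ← ha, inv_mul_cancel₀ hma]
  have hqneg : ∀ n : ℤ, n < 0 → q.coeff n = 0 := by
    intro n hn
    rw [hqcoeff n]
    have : pl.coeff (m + n) = 0 := by
      apply Finsupp.notMem_support_iff.1
      intro hmem
      have := pl.coeff.support.min'_le _ hmem
      omega
    rw [this, mul_zero]
  set r : LaurentPolynomial K := 1 - q with hr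
  have hrx : r • x = x := by
    rw [hr, sub_smul, one_smul, hqx, sub_zero]
  have hrsupp : ∀ n ∈ r.coeff.support, 1 ≤ n := by
    intro n hn
    have hne : r.coeff n ≠ 0 := Finsupp.mem_support_iff.1 hn
    by_contra hlt
    push_neg at hlt
    have h1n : (1 : LaurentPolynomial K).coeff n = if n = 0 then 1 else 0 := by
      rw [← single_zero_one_eq_one, AddMonoidAlgebra.coeff_single, Finsupp.single_apply]
      simp [eq_comm]
    rcases lt_or_eq_of_le (by omega : n ≤ 0) with h | h
    · apply hne
      rw [hr, AddMonoidAlgebra.coeff_sub, Finsupp.sub_apply, h1n, if_neg (by omega), hqneg n h, sub_zero]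
    · apply hne
      rw [hr, AddMonoidAlgebra.coeff_sub, Finsupp.sub_apply, h1n, h, if_pos rfl, hq0, sub_self]
  -- Step lemma : from `x ∈ I b` deduce `x ∈ I (b + 2π)`.
  have hstep : ∀ b : ℝ, x ∈ I b → x ∈ I (b + 2 * Real.pi) := by
    intro b hb
    have hxsum : x = ∑ n ∈ r.coeff.support, (r.coeff n) • ((T n : LaurentPolynomial K) • x) := by
      conv_lhs => rw [← hrx]
      conv_lhs => rw [← AddMonoidAlgebra.sum_coeff_single r]
      rw [Finsupp.sum, Finset.sum_smul]
      refine Finset.sum_congr rfl fun n _ => ?_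
      rw [single_eq_C_mul_T, mul_smul, C_eq_algebraMap, algebraMap_smul]
    rw [hxsum]
    exact Submodule.sum_mem _ fun n hn =>
      Submodule.smul_mem _ _ (hT n (hrsupp n hn) b x hb)
  -- Get a starting level from the supremum hypothesis.
  have hdir : Directed (· ≤ ·) I := fun b b' =>
    ⟨min b b', hI (min_le_left _ _), hI (min_le_right _ _)⟩
  have hx_top : x ∈ ⨆ b : ℝ, I b := by rw [hsup]; trivial
  obtain ⟨b0, hb0⟩ := (Submodule.mem_iSup_of_directed I hdir).1 hx_top
  have hN : ∀ N : ℕ, x ∈ I (b0 + N * (2 * Real.pi)) := by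
    intro N
    induction N with
    | zero => simpa using hb0
    | succ n ihn =>
      have : b0 + (n + 1 : ℕ) * (2 * Real.pi)
          = (b0 + n * (2 * Real.pi)) + 2 * Real.pi := by
        push_cast; ring
      rw [this]
      exact hstep _ ihn
  refine Submodule.mem_iInf _ |>.2 fun c => ?_
  obtain ⟨N, hNc⟩ := exists_nat_ge ((c - b0) / (2 * Real.pi))
  have h2pi : (0 : ℝ) < 2 * Real.pi := by linarith
  have : c ≤ b0 + N * (2 * Real.pi) := by
    rw [div_le_iff₀ h2pi] at hNc; linarith
  exact hI this (hN N)
end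

section
/- Let J : ℝ → Submodule K M be monotone and I : ℝ → Submodule K M antitone, and let a, b ∈ ℝ. If there exists ε > 0 with J (a - ε) = J (a + ε), or there exists ε > 0 with I (b - ε) = I (b + ε), then F(a,b) ≤ F'(a,b); that is, the quotient F(a,b)⧸F'(a,b) is zero. -/
/-- Proposition 3.6 item 1 of the paper: `δ^f̃_r(a,b) ≠ 0` implies that both `a` and `b`
are homologically critical values. Let `J : ℝ → Submodule K M` be monotone and
`I : ℝ → Submodule K M` antitone, `F(a,b) := J a ⊓ I b` and
`F'(a,b) := (⨆_{a' < a} J a' ⊓ I b) ⊔ (⨆_{b' > b} J a ⊓ I b')`. If `J` is constant near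
`a` or `I` is constant near `b`, then `F(a,b) ≤ F'(a,b)`, i.e. the quotient
`F(a,b)⧸F'(a,b)` vanishes. -/
theorem stmt7 (K : Type*) [Field K] (M : Type*) [AddCommGroup M] [Module K M]
    (J I : ℝ → Submodule K M) (hJ : Monotone J) (hI : Antitone I) (a b : ℝ)
    (h : (∃ ε > (0 : ℝ), J (a - ε) = J (a + ε)) ∨
         (∃ ε > (0 : ℝ), I (b - ε) = I (b + ε))) :
    J a ⊓ I b ≤ (⨆ a' < a, J a' ⊓ I b) ⊔ (⨆ b' > b, J a ⊓ I b') := by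
  rcases h with ⟨ε, hε, hJε⟩ | ⟨ε, hε, hIε⟩
  · refine le_trans ?_ le_sup_left
    have h1 : J a ≤ J (a - ε) := hJε ▸ hJ (by linarith)
    calc J a ⊓ I b ≤ J (a - ε) ⊓ I b := inf_le_inf_right _ h1
      _ ≤ ⨆ a' < a, J a' ⊓ I b :=
        le_biSup (fun a' => J a' ⊓ I b) (show a - ε < a by linarith)
  · refine le_trans ?_ le_sup_right
    have h1 : I b ≤ I (b + ε) := hIε ▸ hI (by linarith)
    calc J a ⊓ I b ≤ J a ⊓ I (b + ε) := inf_le_inf_left _ h1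
      _ ≤ ⨆ b' > b, J a ⊓ I b' :=
        le_biSup (fun b' => J a ⊓ I b') (show b + ε > b by linarith)
end

section
/- Let J : ℝ → Submodule K M be monotone and I : ℝ → Submodule K M antitone, and let a₀, b₀ ∈ ℝ be such that J a₀ ⊓ I b₀ is a finite-dimensional K-vector space. Then the set { (a,b) ∈ ℝ × ℝ | a ≤ a₀ and b₀ ≤ b and ¬(F(a,b) ≤ F'(a,b)) } is finite. -/
section Aux

variable {K : Type*} [Field K] {M : Type*} [AddCommGroup M] [Module K M]

lemma mem_biSup_lt_iff {f : ℝ → Submodule K M} (hf : Monotone f) {c : ℝ} {x : M} :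
    x ∈ (⨆ a' < c, f a') ↔ ∃ a' < c, x ∈ f a' := by
  rw [iSup_subtype']
  haveI : Nonempty {a' // a' < c} := ⟨⟨c - 1, by linarith⟩⟩
  rw [Submodule.mem_iSup_of_directed]
  · constructor
    · rintro ⟨⟨a', ha'⟩, hx⟩; exact ⟨a', ha', hx⟩
    · rintro ⟨a', ha', hx⟩; exact ⟨⟨a', ha'⟩, hx⟩
  · intro i j
    exact ⟨⟨max i.1 j.1, max_lt i.2 j.2⟩, hf (le_max_left _ _), hf (le_max_right _ _)⟩

lemma mem_biSup_gt_iff {f : ℝ → Submodule K M} (hf : Antitone f) {c : ℝ} {x : M} :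
    x ∈ (⨆ b' > c, f b') ↔ ∃ b' > c, x ∈ f b' := by
  rw [iSup_subtype']
  haveI : Nonempty {b' // b' > c} := ⟨⟨c + 1, by linarith⟩⟩
  rw [Submodule.mem_iSup_of_directed]
  · constructor
    · rintro ⟨⟨b', hb'⟩, hx⟩; exact ⟨b', hb', hx⟩
    · rintro ⟨b', hb', hx⟩; exact ⟨⟨b', hb'⟩, hx⟩
  · intro i j
    exact ⟨⟨min i.1 j.1, lt_min i.2 j.2⟩, hf (min_le_left _ _), hf (min_le_right _ _)⟩

lemma jumps_finite_mono (G : ℝ → Submodule K M) (hG : Monotone G) (a₀ : ℝ)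
    (hfd : FiniteDimensional K (G a₀)) :
    {a : ℝ | a ≤ a₀ ∧ ¬ (G a ≤ ⨆ a' < a, G a')}.Finite := by
  set S := {a : ℝ | a ≤ a₀ ∧ ¬ (G a ≤ ⨆ a' < a, G a')} with hS
  have key : ∀ x y : ℝ, x < y → y ∈ S →
      Module.finrank K (G x) < Module.finrank K (G y) := by
    intro x y hxy hy
    haveI : FiniteDimensional K (G y) := Submodule.finiteDimensional_of_le (hG hy.1)
    refine Submodule.finrank_lt_finrank_of_lt (lt_of_le_of_ne (hG hxy.le) ?_)
    intro he
    exact hy.2 (he ▸ le_iSup₂ (f := fun a' (_ : a' < y) => G a') x hxy)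
  have hinj : Set.InjOn (fun a => Module.finrank K (G a)) S := by
    intro x hx y hy heq
    rcases lt_trichotomy x y with h | h | h
    · exact absurd heq (key x y h hy).ne
    · exact h
    · exact absurd heq.symm (key y x h hx).ne
  refine Set.Finite.of_finite_image (Set.Finite.subset
    (Set.finite_Iic (Module.finrank K (G a₀))) ?_) hinj
  rintro n ⟨a, ha, rfl⟩
  exact Submodule.finrank_mono (hG ha.1)

lemma jumps_finite_anti (G : ℝ → Submodule K M) (hG : Antitone G) (b₀ : ℝ)
    (hfd : FiniteDimensional K (G b₀)) :
    {b : ℝ | b₀ ≤ b ∧ ¬ (G b ≤ ⨆ b' > b, G b')}.Finite := by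
  set S := {b : ℝ | b₀ ≤ b ∧ ¬ (G b ≤ ⨆ b' > b, G b')} with hS
  have key : ∀ x y : ℝ, x < y → x ∈ S →
      Module.finrank K (G y) < Module.finrank K (G x) := by
    intro x y hxy hx
    haveI : FiniteDimensional K (G x) := Submodule.finiteDimensional_of_le (hG hx.1)
    refine Submodule.finrank_lt_finrank_of_lt (lt_of_le_of_ne (hG hxy.le) ?_)
    intro he
    exact hx.2 (he ▸ le_iSup₂ (f := fun b' (_ : b' > x) => G b') y hxy)
  have hinj : Set.InjOn (fun b => Module.finrank K (G b)) S := by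
    intro x hx y hy heq
    rcases lt_trichotomy x y with h | h | h
    · exact absurd heq.symm (key x y h hx).ne
    · exact h
    · exact absurd heq (key y x h hy).ne
  refine Set.Finite.of_finite_image (Set.Finite.subset
    (Set.finite_Iic (Module.finrank K (G b₀))) ?_) hinj
  rintro n ⟨b, hb, rfl⟩
  exact Submodule.finrank_mono (hG hb.1)

end Aux

/-- Proposition 3.6 item 2 of the paper: for any box, the support of `δ^f̃_r` inside the
box is finite. Let `J : ℝ → Submodule K M` be monotone and `I : ℝ → Submodule K M`
antitone with `J a₀ ⊓ I b₀` finite dimensional over `K`, and set `F(a,b) := J a ⊓ I b`,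
`F'(a,b) := (⨆_{a' < a} J a' ⊓ I b) ⊔ (⨆_{b' > b} J a ⊓ I b')`. Then the set of points
`(a,b)` with `a ≤ a₀`, `b₀ ≤ b` and `F(a,b) ≰ F'(a,b)` is finite. -/
theorem stmt8 (K : Type*) [Field K] (M : Type*) [AddCommGroup M] [Module K M]
    (J I : ℝ → Submodule K M) (hJ : Monotone J) (hI : Antitone I) (a₀ b₀ : ℝ)
    (hfin : FiniteDimensional K ↥(J a₀ ⊓ I b₀)) :
    {p : ℝ × ℝ | p.1 ≤ a₀ ∧ b₀ ≤ p.2 ∧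
      ¬ (J p.1 ⊓ I p.2 ≤
          (⨆ a' < p.1, J a' ⊓ I p.2) ⊔ (⨆ b' > p.2, J p.1 ⊓ I b'))}.Finite := by
  have hA : {a : ℝ | a ≤ a₀ ∧ ¬ ((fun a => J a ⊓ I b₀) a ≤
      ⨆ a' < a, (fun a => J a ⊓ I b₀) a')}.Finite :=
    jumps_finite_mono (fun a => J a ⊓ I b₀) (fun x y h => inf_le_inf_right _ (hJ h)) a₀ hfin
  have hB : {b : ℝ | b₀ ≤ b ∧ ¬ ((fun b => J a₀ ⊓ I b) b ≤
      ⨆ b' > b, (fun b => J a₀ ⊓ I b) b')}.Finite :=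
    jumps_finite_anti (fun b => J a₀ ⊓ I b) (fun x y h => inf_le_inf_left _ (hI h)) b₀ hfin
  refine Set.Finite.subset (hA.prod hB) ?_
  rintro ⟨a, b⟩ ⟨ha, hb, hF⟩
  constructor
  · refine ⟨ha, fun hle => hF ?_⟩
    intro x hx
    refine le_sup_left (α := Submodule K M) ?_
    have hx' : x ∈ J a ⊓ I b₀ := ⟨hx.1, hI hb hx.2⟩
    have := (mem_biSup_lt_iff (f := fun a => J a ⊓ I b₀)
      (fun u v h => inf_le_inf_right _ (hJ h))).mp (hle hx')
    obtain ⟨a', ha', hxa'⟩ := this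
    exact (mem_biSup_lt_iff (f := fun a' => J a' ⊓ I b)
      (fun u v h => inf_le_inf_right _ (hJ h))).mpr ⟨a', ha', hxa'.1, hx.2⟩
  · refine ⟨hb, fun hle => hF ?_⟩
    intro x hx
    refine le_sup_right (α := Submodule K M) ?_
    have hx' : x ∈ J a₀ ⊓ I b := ⟨hJ ha hx.1, hx.2⟩
    have := (mem_biSup_gt_iff (f := fun b => J a₀ ⊓ I b)
      (fun u v h => inf_le_inf_left _ (hI h))).mp (hle hx')
    obtain ⟨b', hb', hxb'⟩ := this
    exact (mem_biSup_gt_iff (f := fun b' => J a ⊓ I b')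
      (fun u v h => inf_le_inf_left _ (hI h))).mpr ⟨b', hb', hx.1, hxb'.2⟩
end

section
/- Let m, n ≥ 1, let J : Fin (m+1) → Submodule K M be monotone and I : Fin (n+1) → Submodule K M antitone (with respect to the order on Fin), and assume J m ⊓ I 0 is a finite-dimensional K-vector space. Then finrank_K of (J m ⊓ I 0)⧸((J 0 ⊓ I 0) ⊔ (J m ⊓ I n)) equals the sum over all i with 1 ≤ i ≤ m and all j with 0 ≤ j ≤ n-1 of finrank_K of (J i ⊓ I j)⧸((J (i-1) ⊓ I j) ⊔ (J i ⊓ I (j+1))). -/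
lemma aux_quot {K : Type*} [Field K] {M : Type*} [AddCommGroup M] [Module K M]
    (P Q : Submodule K M) [FiniteDimensional K P] (h : Q ≤ P) :
    (Module.finrank K (↥P ⧸ Q.comap P.subtype) : ℤ) =
      Module.finrank K P - Module.finrank K Q := by
  have h1 := Submodule.finrank_quotient_add_finrank (Q.comap P.subtype)
  have h2 := (Submodule.comapSubtypeEquivOfLe h).finrank_eq
  rw [h2] at h1
  omega

/-- The grid (tame) form of Proposition 3.6 item 3 of the paper:
`dim F_r(B) = Σ_{(a,b) ∈ supp δ^f̃_r ∩ B} δ^f̃_r(a,b)`.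
Let `J : Fin (m+1) → Submodule K M` be monotone and `I : Fin (n+1) → Submodule K M`
antitone with `J m ⊓ I 0` finite dimensional. Then the dimension of
`(J m ⊓ I 0)⧸((J 0 ⊓ I 0) ⊔ (J m ⊓ I n))` equals the sum over `1 ≤ i ≤ m`,
`0 ≤ j ≤ n-1` of the dimensions of `(J i ⊓ I j)⧸((J (i-1) ⊓ I j) ⊔ (J i ⊓ I (j+1)))`. -/
theorem stmt9 (K : Type*) [Field K] (M : Type*) [AddCommGroup M] [Module K M]
    (m n : ℕ) (hm : 1 ≤ m) (hn : 1 ≤ n)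
    (J : Fin (m + 1) → Submodule K M) (I : Fin (n + 1) → Submodule K M)
    (hJ : Monotone J) (hI : Antitone I)
    (hfin : FiniteDimensional K ↥(J (Fin.last m) ⊓ I 0)) :
    Module.finrank K
        (↥(J (Fin.last m) ⊓ I 0) ⧸
          ((J 0 ⊓ I 0) ⊔ (J (Fin.last m) ⊓ I (Fin.last n))).comap
            (J (Fin.last m) ⊓ I 0).subtype) =
      ∑ i : Fin m, ∑ j : Fin n,
        Module.finrank K
          (↥(J i.succ ⊓ I j.castSucc) ⧸
            ((J i.castSucc ⊓ I j.castSucc) ⊔ (J i.succ ⊓ I j.succ)).comap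
              (J i.succ ⊓ I j.castSucc).subtype) := by
  classical
  -- all the relevant submodules are finite dimensional
  have key : ∀ i j, J i ⊓ I j ≤ J (Fin.last m) ⊓ I 0 := fun i j =>
    inf_le_inf (hJ (Fin.le_last i)) (hI (Fin.zero_le j))
  have hfd : ∀ i j, FiniteDimensional K ↥(J i ⊓ I j) := fun i j =>
    Submodule.finiteDimensional_of_le (key i j)
  -- f : the ℤ-valued rank function
  set f : Fin (m+1) → Fin (n+1) → ℤ :=
    fun i j => (Module.finrank K ↥(J i ⊓ I j) : ℤ) with hf
  -- rank of a sup
  have hsup : ∀ (i i' : Fin (m+1)) (j j' : Fin (n+1)), i ≤ i' → j ≤ j' →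
      ((Module.finrank K ↥((J i ⊓ I j) ⊔ (J i' ⊓ I j')) : ℤ)) =
        f i j + f i' j' - f i j' := by
    intro i i' j j' hi hj
    haveI := hfd i j; haveI := hfd i' j'
    have h1 := Submodule.finrank_sup_add_finrank_inf_eq (J i ⊓ I j) (J i' ⊓ I j')
    have h2 : (J i ⊓ I j) ⊓ (J i' ⊓ I j') = J i ⊓ I j' := by
      apply le_antisymm
      · exact le_inf (inf_le_left.trans inf_le_left) (inf_le_right.trans inf_le_right)
      · exact le_inf (le_inf inf_le_left ((inf_le_right).trans (hI hj)))
          (le_inf (inf_le_left.trans (hJ hi)) inf_le_right)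
    rw [h2] at h1
    simp only [hf]
    omega
  -- each summand
  have hterm : ∀ (i : Fin m) (j : Fin n),
      (Module.finrank K
          (↥(J i.succ ⊓ I j.castSucc) ⧸
            ((J i.castSucc ⊓ I j.castSucc) ⊔ (J i.succ ⊓ I j.succ)).comap
              (J i.succ ⊓ I j.castSucc).subtype) : ℤ) =
        f i.succ j.castSucc - f i.castSucc j.castSucc
          - f i.succ j.succ + f i.castSucc j.succ := by
    intro i j
    haveI := hfd i.succ j.castSucc
    have hle : (J i.castSucc ⊓ I j.castSucc) ⊔ (J i.succ ⊓ I j.succ)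
        ≤ J i.succ ⊓ I j.castSucc :=
      sup_le (inf_le_inf (hJ (Fin.castSucc_le_succ i)) le_rfl)
        (inf_le_inf le_rfl (hI (Fin.castSucc_le_succ j)))
    rw [aux_quot _ _ hle,
      hsup i.castSucc i.succ j.castSucc j.succ (Fin.castSucc_le_succ i) (Fin.castSucc_le_succ j)]
    ring
  -- the left hand side
  have hlhs : (Module.finrank K
        (↥(J (Fin.last m) ⊓ I 0) ⧸
          ((J 0 ⊓ I 0) ⊔ (J (Fin.last m) ⊓ I (Fin.last n))).comap
            (J (Fin.last m) ⊓ I 0).subtype) : ℤ) =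
      f (Fin.last m) 0 - f 0 0 - f (Fin.last m) (Fin.last n) + f 0 (Fin.last n) := by
    have hle : (J 0 ⊓ I 0) ⊔ (J (Fin.last m) ⊓ I (Fin.last n)) ≤ J (Fin.last m) ⊓ I 0 :=
      sup_le (inf_le_inf (hJ (Fin.zero_le _)) le_rfl)
        (inf_le_inf le_rfl (hI (Fin.zero_le _)))
    rw [aux_quot _ _ hle, hsup 0 (Fin.last m) 0 (Fin.last n) (Fin.zero_le _) (Fin.zero_le _)]
    ring
  -- pass to ℤ
  have hcast : ∀ a b : ℕ, (a : ℤ) = b → a = b := fun a b h => by exact_mod_cast h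
  apply hcast
  push_cast
  calc ((Module.finrank K _ : ℕ) : ℤ) = _ := hlhs
    _ = ∑ i : Fin m, ∑ j : Fin n,
        ((Module.finrank K
          (↥(J i.succ ⊓ I j.castSucc) ⧸
            ((J i.castSucc ⊓ I j.castSucc) ⊔ (J i.succ ⊓ I j.succ)).comap
              (J i.succ ⊓ I j.castSucc).subtype) : ℕ) : ℤ) := by
      simp only [hterm]
      -- telescoping, in ℕ-indexed form
      set g : ℕ → ℕ → ℤ := fun x y =>
        f ⟨min x m, Nat.lt_succ_of_le (Nat.min_le_right _ _)⟩
          ⟨min y n, Nat.lt_succ_of_le (Nat.min_le_right _ _)⟩ with hg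
      have hfg : ∀ (a : Fin (m+1)) (b : Fin (n+1)), f a b = g ↑a ↑b := by
        intro a b
        simp only [hg]
        congr 1
        · exact Fin.ext (show (a : ℕ) = min ↑a m by have := a.isLt; omega)
        · exact Fin.ext (show (b : ℕ) = min ↑b n by have := b.isLt; omega)
      simp only [hfg, Fin.val_succ, Fin.coe_castSucc, Fin.val_last, Fin.val_zero]
      rw [Fin.sum_univ_eq_sum_range
        (fun i => ∑ j : Fin n, (g (i+1) ↑j - g i ↑j - g (i+1) (↑j+1) + g i (↑j+1)))]
      rw [Finset.sum_congr rfl fun i _ => Fin.sum_univ_eq_sum_range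
        (fun j => g (i+1) j - g i j - g (i+1) (j+1) + g i (j+1)) n]
      have inner : ∀ i, ∑ j ∈ Finset.range n,
          (g (i+1) j - g i j - g (i+1) (j+1) + g i (j+1))
          = (g (i+1) 0 - g i 0) - (g (i+1) n - g i n) := by
        intro i
        have h := Finset.sum_range_sub' (fun j => g (i+1) j - g i j) n
        rw [← h]
        exact Finset.sum_congr rfl fun j _ => by ring
      rw [Finset.sum_congr rfl fun i _ => inner i, Finset.sum_sub_distrib,
        Finset.sum_range_sub (fun i => g i 0), Finset.sum_range_sub (fun i => g i n)]
      ring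
end

section
/- Let J : ℝ → Submodule K M be monotone and I : ℝ → Submodule K M antitone, let a₀, b₀ ∈ ℝ be such that J a₀ ⊓ I b₀ is a finite-dimensional K-vector space, and let Σ be a finite set of pairs (a,b) ∈ ℝ × ℝ with a ≤ a₀ and b₀ ≤ b. For each (a,b) ∈ Σ let s_{(a,b)} : F(a,b)⧸F'(a,b) → F(a,b) be a K-linear right inverse of the canonical projection F(a,b) → F(a,b)⧸F'(a,b). Then the K-linear map from the direct sum ⨁_{(a,b) ∈ Σ} F(a,b)⧸F'(a,b) to M that sends a family (x_{(a,b)}) to Σ_{(a,b) ∈ Σ} s_{(a,b)}(x_{(a,b)}) (each summand regarded as an element of M via the inclusion F(a,b) ≤ M) is injective. -/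
/-- `F(a,b) := J a ⊓ I b` for a two-parameter family of submodules. -/
def boxF {K : Type*} [Field K] {M : Type*} [AddCommGroup M] [Module K M]
    (J I : ℝ → Submodule K M) (p : ℝ × ℝ) : Submodule K M :=
  J p.1 ⊓ I p.2

/-- `F'(a,b) := (⨆_{a' < a} J a' ⊓ I b) ⊔ (⨆_{b' > b} J a ⊓ I b')`. -/
def boxF' {K : Type*} [Field K] {M : Type*} [AddCommGroup M] [Module K M]
    (J I : ℝ → Submodule K M) (p : ℝ × ℝ) : Submodule K M :=
  (⨆ a' < p.1, J a' ⊓ I p.2) ⊔ (⨆ b' > p.2, J p.1 ⊓ I b')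

/-- Proposition 3.7 item 1 of the paper: for any finite subset `S` of the support and any
choice of splittings `s_{(a,b)} : F(a,b)⧸F'(a,b) → F(a,b)` of the canonical projections,
the map `⨁_{(a,b) ∈ S} F(a,b)⧸F'(a,b) → M`, `(x_{(a,b)}) ↦ Σ s_{(a,b)}(x_{(a,b)})`,
is injective. -/
theorem stmt10 (K : Type*) [Field K] (M : Type*) [AddCommGroup M] [Module K M]
    (J I : ℝ → Submodule K M) (hJ : Monotone J) (hI : Antitone I) (a₀ b₀ : ℝ)
    (hfin : FiniteDimensional K ↥(J a₀ ⊓ I b₀))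
    (S : Finset (ℝ × ℝ)) (hS : ∀ p ∈ S, p.1 ≤ a₀ ∧ b₀ ≤ p.2)
    (s : (p : ↥S) →
      (↥(boxF J I (p : ℝ × ℝ)) ⧸
          (boxF' J I (p : ℝ × ℝ)).comap (boxF J I (p : ℝ × ℝ)).subtype) →ₗ[K]
        ↥(boxF J I (p : ℝ × ℝ)))
    (hs : ∀ (p : ↥S) (x : ↥(boxF J I (p : ℝ × ℝ)) ⧸
          (boxF' J I (p : ℝ × ℝ)).comap (boxF J I (p : ℝ × ℝ)).subtype),
      ((boxF' J I (p : ℝ × ℝ)).comap (boxF J I (p : ℝ × ℝ)).subtype).mkQ (s p x) = x) :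
    Function.Injective
      (fun x : (p : ↥S) → (↥(boxF J I (p : ℝ × ℝ)) ⧸
          (boxF' J I (p : ℝ × ℝ)).comap (boxF J I (p : ℝ × ℝ)).subtype) =>
        ∑ p : ↥S, ((s p (x p) : ↥(boxF J I (p : ℝ × ℝ))) : M)) := by
  classical
  have key : ∀ x : (p : ↥S) → (↥(boxF J I (p : ℝ × ℝ)) ⧸
      (boxF' J I (p : ℝ × ℝ)).comap (boxF J I (p : ℝ × ℝ)).subtype),
      (∑ p : ↥S, ((s p (x p) : ↥(boxF J I (p : ℝ × ℝ))) : M)) = 0 → x = 0 := by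
    intro x hx
    by_contra hne
    set v : ↥S → M := fun q => ((s q (x q) : ↥(boxF J I (q : ℝ × ℝ))) : M) with hv
    have hvmem : ∀ q : ↥S, v q ∈ J (q : ℝ × ℝ).1 ⊓ I (q : ℝ × ℝ).2 := fun q => (s q (x q)).2
    set T : Finset ↥S := Finset.univ.filter (fun q => x q ≠ 0) with hTdef
    have hTne : T.Nonempty := by
      obtain ⟨q, hq⟩ := Function.ne_iff.mp hne
      exact ⟨q, by simp only [hTdef, Finset.mem_filter, Finset.mem_univ, true_and]; simpa using hq⟩
    obtain ⟨p₁, hp₁T, hp₁max⟩ := T.exists_max_image (fun q => (q : ℝ × ℝ).1) hTne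
    set T' : Finset ↥S := T.filter (fun q => (q : ℝ × ℝ).1 = (p₁ : ℝ × ℝ).1) with hT'def
    have hT'ne : T'.Nonempty := ⟨p₁, by simp [hT'def, hp₁T]⟩
    obtain ⟨p0, hp0T', hmin⟩ := T'.exists_min_image (fun q => (q : ℝ × ℝ).2) hT'ne
    have hp0T : p0 ∈ T := (Finset.mem_filter.mp hp0T').1
    have hp0a : (p0 : ℝ × ℝ).1 = (p₁ : ℝ × ℝ).1 := (Finset.mem_filter.mp hp0T').2
    set A : ℝ := (p0 : ℝ × ℝ).1 with hA
    set B : ℝ := (p0 : ℝ × ℝ).2 with hB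
    have hmaxA : ∀ q ∈ T, (q : ℝ × ℝ).1 ≤ A := by
      intro q hq; rw [hp0a]; exact hp₁max q hq
    -- decompose the sum
    set P : Finset ↥S := T.erase p0 with hP
    set S₁ : Finset ↥S := P.filter (fun q => (q : ℝ × ℝ).1 < A) with hS₁
    set S₂ : Finset ↥S := P.filter (fun q => ¬ (q : ℝ × ℝ).1 < A) with hS₂
    have hS₂prop : ∀ q ∈ S₂, (q : ℝ × ℝ).1 = A ∧ B < (q : ℝ × ℝ).2 := by
      intro q hq
      obtain ⟨hqP, hqn⟩ := Finset.mem_filter.mp hq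
      have hqT : q ∈ T := Finset.mem_erase.mp hqP |>.2
      have hqne : q ≠ p0 := Finset.mem_erase.mp hqP |>.1
      have h1 : (q : ℝ × ℝ).1 = A := le_antisymm (hmaxA q hqT) (not_lt.mp hqn)
      refine ⟨h1, ?_⟩
      have hqT' : q ∈ T' := Finset.mem_filter.mpr ⟨hqT, by rw [← hp0a]; exact h1⟩
      have hle : B ≤ (q : ℝ × ℝ).2 := hmin q hqT'
      rcases lt_or_eq_of_le hle with h | h
      · exact h
      · exfalso
        apply hqne
        apply Subtype.ext
        exact Prod.ext (h1.trans hA) (h.symm.trans hB)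
    have hsum : v p0 + (∑ q ∈ S₁, v q + ∑ q ∈ S₂, v q) = 0 := by
      have e1 : ∑ q ∈ S₁, v q + ∑ q ∈ S₂, v q = ∑ q ∈ P, v q :=
        Finset.sum_filter_add_sum_filter_not P _ v
      have e2 : v p0 + ∑ q ∈ P, v q = ∑ q ∈ T, v q := Finset.add_sum_erase T v hp0T
      have e3 : ∑ q ∈ T, v q = ∑ q : ↥S, v q := by
        apply Finset.sum_subset (Finset.subset_univ T)
        intro q _ hq
        have : x q = 0 := by
          by_contra h
          exact hq (Finset.mem_filter.mpr ⟨Finset.mem_univ q, h⟩)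
        simp [hv, this]
      rw [e1, e2, e3]
      exact hx
    -- memberships
    have hUJ : ∀ c, (∀ q ∈ S₂, c ≤ (q : ℝ × ℝ).2) → ∑ q ∈ S₂, v q ∈ J A ⊓ I c := by
      intro c hc
      apply Submodule.sum_mem
      intro q hq
      obtain ⟨h1, _⟩ := hS₂prop q hq
      have := hvmem q
      exact ⟨h1 ▸ this.1, hI (hc q hq) this.2⟩
    have hUI : ∑ q ∈ S₂, v q ∈ I B :=
      (hUJ B (fun q hq => le_of_lt (hS₂prop q hq).2)).2
    have hvp0I : v p0 ∈ I B := (hvmem p0).2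
    have hS₁I : ∑ q ∈ S₁, v q ∈ I B := by
      have : ∑ q ∈ S₁, v q = -(v p0) - ∑ q ∈ S₂, v q := by linear_combination (norm := abel) hsum
      rw [this]
      exact sub_mem (neg_mem hvp0I) hUI
    have hS₁J : ∀ c, (∀ q ∈ S₁, (q : ℝ × ℝ).1 ≤ c) → ∑ q ∈ S₁, v q ∈ J c := by
      intro c hc
      apply Submodule.sum_mem
      intro q hq
      exact hJ (hc q hq) (hvmem q).1
    -- the two pieces are in F'(p0)
    have hUF' : ∑ q ∈ S₂, v q ∈ boxF' J I (p0 : ℝ × ℝ) := by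
      rcases S₂.eq_empty_or_nonempty with h | h
      · rw [h]; simp
      · obtain ⟨q0, hq0, hq0min⟩ := S₂.exists_min_image (fun q => (q : ℝ × ℝ).2) h
        set c := (q0 : ℝ × ℝ).2 with hc
        have hcB : B < c := (hS₂prop q0 hq0).2
        have hmem : ∑ q ∈ S₂, v q ∈ J A ⊓ I c := hUJ c hq0min
        apply Submodule.mem_sup_right
        exact Submodule.mem_iSup_of_mem c (Submodule.mem_iSup_of_mem hcB hmem)
    have hTF' : ∑ q ∈ S₁, v q ∈ boxF' J I (p0 : ℝ × ℝ) := by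
      rcases S₁.eq_empty_or_nonempty with h | h
      · rw [h]; simp
      · obtain ⟨q0, hq0, hq0max⟩ := S₁.exists_max_image (fun q => (q : ℝ × ℝ).1) h
        set c := (q0 : ℝ × ℝ).1 with hc
        have hcA : c < A := (Finset.mem_filter.mp hq0).2
        have hmem : ∑ q ∈ S₁, v q ∈ J c ⊓ I B := ⟨hS₁J c hq0max, hS₁I⟩
        apply Submodule.mem_sup_left
        exact Submodule.mem_iSup_of_mem c (Submodule.mem_iSup_of_mem hcA hmem)
    have hvF' : v p0 ∈ boxF' J I (p0 : ℝ × ℝ) := by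
      have : v p0 = -(∑ q ∈ S₁, v q) - ∑ q ∈ S₂, v q := by
        linear_combination (norm := abel) hsum
      rw [this]
      exact sub_mem (neg_mem hTF') hUF'
    -- conclude x p0 = 0
    have hxp0 : x p0 = 0 := by
      rw [← hs p0 (x p0)]
      rw [Submodule.mkQ_apply, Submodule.Quotient.mk_eq_zero]
      exact Submodule.mem_comap.mpr hvF'
    have : x p0 ≠ 0 := (Finset.mem_filter.mp hp0T).2
    exact this hxp0
  intro x y hxy
  have h0 : (∑ p : ↥S, ((s p ((x - y) p) : ↥(boxF J I (p : ℝ × ℝ))) : M)) = 0 := by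
    have : ∀ p : ↥S, ((s p ((x - y) p) : ↥(boxF J I (p : ℝ × ℝ))) : M)
        = ((s p (x p) : ↥(boxF J I (p : ℝ × ℝ))) : M)
          - ((s p (y p) : ↥(boxF J I (p : ℝ × ℝ))) : M) := by
      intro p
      simp [Pi.sub_apply, map_sub]
    simp only [this, Finset.sum_sub_distrib]
    rw [sub_eq_zero]
    exact hxy
  have := key (x - y) h0
  exact sub_eq_zero.mp this
end

section
/- Let m, n ≥ 1, let J : Fin (m+1) → Submodule K M be monotone and I : Fin (n+1) → Submodule K M antitone, and assume J m ⊓ I 0 is a finite-dimensional K-vector space. For 1 ≤ i ≤ m and 0 ≤ j ≤ n-1 write δ̂(i,j) := (J i ⊓ I j)⧸((J (i-1) ⊓ I j) ⊔ (J i ⊓ I (j+1))), and let s_{(i,j)} : δ̂(i,j) → J i ⊓ I j be any K-linear right inverse of the canonical projection. Then the K-linear map from ⨁_{i,j} δ̂(i,j) to (J m ⊓ I 0)⧸((J 0 ⊓ I 0) ⊔ (J m ⊓ I n)) sending a family (x_{(i,j)}) to the class of Σ_{i,j} s_{(i,j)}(x_{(i,j)}) (each s_{(i,j)}(x_{(i,j)})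 regarded as an element of J m ⊓ I 0 via the inclusion J i ⊓ I j ≤ J m ⊓ I 0) is a K-linear isomorphism (bijective). -/
open Module Submodule

/-- The grid (tame) form of Proposition 3.7 item 2 of the paper: the map
`I^B_r : ⨁_{(a,b) ∈ supp δ^f̃_r ∩ B} δ̂^f̃_r(a,b) → F_r(B)` is an isomorphism.
Let `J : Fin (m+1) → Submodule K M` be monotone, `I : Fin (n+1) → Submodule K M`
antitone, `J m ⊓ I 0` finite dimensional, and for `1 ≤ i ≤ m`, `0 ≤ j ≤ n-1` let
`s_{(i,j)}` be a linear right inverse of the projection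
`J i ⊓ I j → (J i ⊓ I j)⧸((J (i-1) ⊓ I j) ⊔ (J i ⊓ I (j+1)))`. Then the map sending
a family `(x_{(i,j)})` to the class of `Σ_{i,j} s_{(i,j)}(x_{(i,j)})` in
`(J m ⊓ I 0)⧸((J 0 ⊓ I 0) ⊔ (J m ⊓ I n))` is bijective. -/
theorem stmt11 (K : Type*) [Field K] (M : Type*) [AddCommGroup M] [Module K M]
    (m n : ℕ) (hm : 1 ≤ m) (hn : 1 ≤ n)
    (J : Fin (m + 1) → Submodule K M) (I : Fin (n + 1) → Submodule K M)
    (hJ : Monotone J) (hI : Antitone I)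
    (hfin : FiniteDimensional K ↥(J (Fin.last m) ⊓ I 0))
    (s : (q : Fin m × Fin n) →
      (↥(J q.1.succ ⊓ I q.2.castSucc) ⧸
          ((J q.1.castSucc ⊓ I q.2.castSucc) ⊔ (J q.1.succ ⊓ I q.2.succ)).comap
            (J q.1.succ ⊓ I q.2.castSucc).subtype) →ₗ[K]
        ↥(J q.1.succ ⊓ I q.2.castSucc))
    (hs : ∀ (q : Fin m × Fin n)
        (x : ↥(J q.1.succ ⊓ I q.2.castSucc) ⧸
          ((J q.1.castSucc ⊓ I q.2.castSucc) ⊔ (J q.1.succ ⊓ I q.2.succ)).comap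
            (J q.1.succ ⊓ I q.2.castSucc).subtype),
      (((J q.1.castSucc ⊓ I q.2.castSucc) ⊔ (J q.1.succ ⊓ I q.2.succ)).comap
        (J q.1.succ ⊓ I q.2.castSucc).subtype).mkQ (s q x) = x) :
    Function.Bijective
      (fun x : (q : Fin m × Fin n) →
          (↥(J q.1.succ ⊓ I q.2.castSucc) ⧸
            ((J q.1.castSucc ⊓ I q.2.castSucc) ⊔ (J q.1.succ ⊓ I q.2.succ)).comap
              (J q.1.succ ⊓ I q.2.castSucc).subtype) =>
        (Submodule.Quotient.mk
            (∑ q : Fin m × Fin n,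
              Submodule.inclusion
                (inf_le_inf (hJ (Fin.le_last q.1.succ)) (hI (Fin.zero_le q.2.castSucc)))
                (s q (x q))) :
          ↥(J (Fin.last m) ⊓ I 0) ⧸
            ((J 0 ⊓ I 0) ⊔ (J (Fin.last m) ⊓ I (Fin.last n))).comap
              (J (Fin.last m) ⊓ I 0).subtype)) := by
  classical
  set Qtop : Submodule K ↥(J (Fin.last m) ⊓ I 0) :=
    ((J 0 ⊓ I 0) ⊔ (J (Fin.last m) ⊓ I (Fin.last n))).comap (J (Fin.last m) ⊓ I 0).subtype
    with hQtopdef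
  set G : ((q : Fin m × Fin n) →
      (↥(J q.1.succ ⊓ I q.2.castSucc) ⧸
        ((J q.1.castSucc ⊓ I q.2.castSucc) ⊔ (J q.1.succ ⊓ I q.2.succ)).comap
          (J q.1.succ ⊓ I q.2.castSucc).subtype)) →ₗ[K] ↥(J (Fin.last m) ⊓ I 0) :=
    ∑ q : Fin m × Fin n,
      (Submodule.inclusion
        (inf_le_inf (hJ (Fin.le_last q.1.succ)) (hI (Fin.zero_le q.2.castSucc)))).comp
        ((s q).comp (LinearMap.proj q)) with hGdef
  have hFeq : ∀ x, (Submodule.Quotient.mk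
            (∑ q : Fin m × Fin n,
              Submodule.inclusion
                (inf_le_inf (hJ (Fin.le_last q.1.succ)) (hI (Fin.zero_le q.2.castSucc)))
                (s q (x q))) :
          ↥(J (Fin.last m) ⊓ I 0) ⧸ Qtop) = (Qtop.mkQ.comp G) x := by
    intro x
    rw [LinearMap.comp_apply, hGdef, LinearMap.sum_apply, ← Submodule.mkQ_apply, map_sum]
    simp [LinearMap.comp_apply]
  suffices h : Function.Bijective (Qtop.mkQ.comp G) by
    have : (fun x : (q : Fin m × Fin n) →
          (↥(J q.1.succ ⊓ I q.2.castSucc) ⧸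
            ((J q.1.castSucc ⊓ I q.2.castSucc) ⊔ (J q.1.succ ⊓ I q.2.succ)).comap
              (J q.1.succ ⊓ I q.2.castSucc).subtype) =>
        (Submodule.Quotient.mk
            (∑ q : Fin m × Fin n,
              Submodule.inclusion
                (inf_le_inf (hJ (Fin.le_last q.1.succ)) (hI (Fin.zero_le q.2.castSucc)))
                (s q (x q))) :
          ↥(J (Fin.last m) ⊓ I 0) ⧸ Qtop)) = ⇑(Qtop.mkQ.comp G) := funext hFeq
    rw [this]
    exact h
  set L : _ →ₗ[K] M := (J (Fin.last m) ⊓ I 0).subtype.comp G with hLdef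
  have key : ∀ (k i j : ℕ) (hi : i ≤ m) (hj : j ≤ n), i + (n - j) ≤ k →
      J ⟨i, by omega⟩ ⊓ I ⟨j, by omega⟩ ≤
        (J 0 ⊓ I ⟨j, by omega⟩ ⊔ J ⟨i, by omega⟩ ⊓ I (Fin.last n)) ⊔ LinearMap.range L := by
    intro k
    induction k with
    | zero =>
      intro i j hi hj hk
      obtain rfl : i = 0 := by omega
      have e0 : (⟨0, by omega⟩ : Fin (m + 1)) = 0 := Fin.ext (by simp)
      rw [e0]
      exact le_sup_of_le_left le_sup_left
    | succ k ih =>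
      intro i j hi hj hk
      rcases Nat.eq_zero_or_pos i with rfl | hipos
      · have e0 : (⟨0, by omega⟩ : Fin (m + 1)) = 0 := Fin.ext (by simp)
        rw [e0]
        exact le_sup_of_le_left le_sup_left
      rcases eq_or_lt_of_le hj with heq | hjn
      · have en : I (⟨j, by omega⟩ : Fin (n + 1)) = I (Fin.last n) :=
          congrArg I (Fin.ext (by simp [heq]))
        rw [en]
        exact le_sup_of_le_left le_sup_right
      obtain ⟨i', rfl⟩ : ∃ i', i = i' + 1 := ⟨i - 1, by omega⟩
      intro x hx
      have hq1 : i' < m := by omega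
      have hq2 : j < n := by omega
      set q : Fin m × Fin n := (⟨i', hq1⟩, ⟨j, hq2⟩) with hqdef
      have hxP : x ∈ J q.1.succ ⊓ I q.2.castSucc := hx
      have hπy := hs q (((J q.1.castSucc ⊓ I q.2.castSucc ⊔ J q.1.succ ⊓ I q.2.succ).comap
        (J q.1.succ ⊓ I q.2.castSucc).subtype).mkQ ⟨x, hxP⟩)
      set y : ↥(J q.1.succ ⊓ I q.2.castSucc) :=
        s q (((J q.1.castSucc ⊓ I q.2.castSucc ⊔ J q.1.succ ⊓ I q.2.succ).comap
          (J q.1.succ ⊓ I q.2.castSucc).subtype).mkQ ⟨x, hxP⟩) with hydef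
      have h1 : (⟨x, hxP⟩ - y : ↥(J q.1.succ ⊓ I q.2.castSucc)) ∈
          (J q.1.castSucc ⊓ I q.2.castSucc ⊔ J q.1.succ ⊓ I q.2.succ).comap
            (J q.1.succ ⊓ I q.2.castSucc).subtype := by
        rw [← Submodule.ker_mkQ ((J q.1.castSucc ⊓ I q.2.castSucc ⊔ J q.1.succ ⊓ I q.2.succ).comap
          (J q.1.succ ⊓ I q.2.castSucc).subtype), LinearMap.mem_ker, map_sub, hπy, sub_self]
      have h2 : x - (y : M) ∈ J q.1.castSucc ⊓ I q.2.castSucc ⊔ J q.1.succ ⊓ I q.2.succ := h1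
      have hyR : (y : M) ∈ LinearMap.range L := by
        refine ⟨Pi.single q (((J q.1.castSucc ⊓ I q.2.castSucc ⊔ J q.1.succ ⊓ I q.2.succ).comap
          (J q.1.succ ⊓ I q.2.castSucc).subtype).mkQ ⟨x, hxP⟩), ?_⟩
        rw [hLdef, LinearMap.comp_apply, hGdef, LinearMap.sum_apply, map_sum,
          Finset.sum_eq_single q]
        · rw [LinearMap.comp_apply, LinearMap.comp_apply, LinearMap.proj_apply,
            Pi.single_eq_same]
          rfl
        · intro b _ hb
          simp [LinearMap.comp_apply, LinearMap.proj_apply, Pi.single_eq_of_ne hb]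
        · intro hq
          exact absurd (Finset.mem_univ q) hq
      obtain ⟨a, ha, b, hb, hab⟩ := Submodule.mem_sup.mp h2
      have haT := ih i' j (by omega) (by omega) (by omega) ha
      have hbT := ih (i' + 1) (j + 1) (by omega) (by omega) (by omega) hb
      have haT' : a ∈ (J 0 ⊓ I ⟨j, by omega⟩ ⊔ J ⟨i' + 1, by omega⟩ ⊓ I (Fin.last n)) ⊔
          LinearMap.range L := by
        refine sup_le_sup (sup_le_sup le_rfl (inf_le_inf (hJ ?_) le_rfl)) le_rfl haT
        exact Fin.mk_le_mk.mpr (by omega)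
      have hbT' : b ∈ (J 0 ⊓ I ⟨j, by omega⟩ ⊔ J ⟨i' + 1, by omega⟩ ⊓ I (Fin.last n)) ⊔
          LinearMap.range L := by
        refine sup_le_sup (sup_le_sup (inf_le_inf le_rfl (hI ?_)) le_rfl) le_rfl hbT
        exact Fin.mk_le_mk.mpr (by omega)
      have hxaby : a + b + (y : M) = x := by rw [hab]; abel
      rw [← hxaby]
      exact add_mem (add_mem haT' hbT') (Submodule.mem_sup_right hyR)
  have hsurj : Function.Surjective (Qtop.mkQ.comp G) := by
    intro c
    obtain ⟨v, rfl⟩ := Submodule.mkQ_surjective Qtop c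
    have eI0 : I 0 = I ⟨0, by omega⟩ := congrArg I (Fin.ext (by simp))
    have hv : (v : M) ∈ J ⟨m, by omega⟩ ⊓ I ⟨0, by omega⟩ :=
      Submodule.mem_inf.mpr ⟨(Submodule.mem_inf.mp v.2).1, by
        rw [← eI0]; exact (Submodule.mem_inf.mp v.2).2⟩
    have := key (m + n) m 0 le_rfl (Nat.zero_le n) (by omega) hv
    obtain ⟨w, hw, r, hr, hwr⟩ := Submodule.mem_sup.mp this
    obtain ⟨xx, hxx⟩ := hr
    refine ⟨xx, ?_⟩
    rw [LinearMap.comp_apply, Submodule.mkQ_apply, Submodule.mkQ_apply]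
    rw [Submodule.Quotient.eq]
    rw [hQtopdef, Submodule.mem_comap]
    have hval : (J (Fin.last m) ⊓ I 0).subtype (G xx - v) = L xx - (v : M) := rfl
    rw [hval]
    have hLv : L xx - (v : M) = -w := by rw [hxx, ← hwr]; abel
    rw [hLv]
    refine neg_mem ?_
    rwa [← eI0] at hw
  have hfd : ∀ (i : Fin (m + 1)) (j : Fin (n + 1)), FiniteDimensional K ↥(J i ⊓ I j) :=
    fun i j => Submodule.finiteDimensional_of_le
      (inf_le_inf (hJ (Fin.le_last i)) (hI (Fin.zero_le j)))
  haveI hfdδ : ∀ q : Fin m × Fin n, FiniteDimensional K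
      (↥(J q.1.succ ⊓ I q.2.castSucc) ⧸
        (J q.1.castSucc ⊓ I q.2.castSucc ⊔ J q.1.succ ⊓ I q.2.succ).comap
          (J q.1.succ ⊓ I q.2.castSucc).subtype) := fun q => by
    haveI := hfd q.1.succ q.2.castSucc
    infer_instance
  set d : ℕ → ℕ → ℤ := fun i j =>
    if h : i ≤ m ∧ j ≤ n then
      (Module.finrank K ↥(J ⟨i, by omega⟩ ⊓ I ⟨j, by omega⟩) : ℤ) else 0
    with hddef
  have hd : ∀ (i j : ℕ) (hi : i ≤ m) (hj : j ≤ n),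
      d i j = (Module.finrank K ↥(J ⟨i, by omega⟩ ⊓ I ⟨j, by omega⟩) : ℤ) := by
    intro i j hi hj
    simp only [hddef]
    exact dif_pos ⟨hi, hj⟩
  have hδrank : ∀ q : Fin m × Fin n,
      (Module.finrank K (↥(J q.1.succ ⊓ I q.2.castSucc) ⧸
        (J q.1.castSucc ⊓ I q.2.castSucc ⊔ J q.1.succ ⊓ I q.2.succ).comap
          (J q.1.succ ⊓ I q.2.castSucc).subtype) : ℤ) =
      d ((q.1 : ℕ) + 1) (q.2 : ℕ) - d (q.1 : ℕ) (q.2 : ℕ)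
        - d ((q.1 : ℕ) + 1) ((q.2 : ℕ) + 1) + d (q.1 : ℕ) ((q.2 : ℕ) + 1) := by
    intro q
    haveI := hfd q.1.succ q.2.castSucc
    haveI := hfd q.1.castSucc q.2.castSucc
    haveI := hfd q.1.succ q.2.succ
    have hAB : J q.1.castSucc ⊓ I q.2.castSucc ⊔ J q.1.succ ⊓ I q.2.succ ≤
        J q.1.succ ⊓ I q.2.castSucc :=
      sup_le (inf_le_inf (hJ (Fin.castSucc_le_succ q.1)) le_rfl)
        (inf_le_inf le_rfl (hI (Fin.castSucc_le_succ q.2)))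
    have e1 := Submodule.finrank_quotient_add_finrank
      ((J q.1.castSucc ⊓ I q.2.castSucc ⊔ J q.1.succ ⊓ I q.2.succ).comap
        (J q.1.succ ⊓ I q.2.castSucc).subtype)
    have e2 : Module.finrank K
        ↥((J q.1.castSucc ⊓ I q.2.castSucc ⊔ J q.1.succ ⊓ I q.2.succ).comap
          (J q.1.succ ⊓ I q.2.castSucc).subtype) =
        Module.finrank K ↥(J q.1.castSucc ⊓ I q.2.castSucc ⊔ J q.1.succ ⊓ I q.2.succ) :=
      (Submodule.comapSubtypeEquivOfLe hAB).finrank_eq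
    have e3 := Submodule.finrank_sup_add_finrank_inf_eq
      (J q.1.castSucc ⊓ I q.2.castSucc) (J q.1.succ ⊓ I q.2.succ)
    have e4 : (J q.1.castSucc ⊓ I q.2.castSucc) ⊓ (J q.1.succ ⊓ I q.2.succ) =
        J q.1.castSucc ⊓ I q.2.succ := by
      apply le_antisymm
      · exact le_inf (inf_le_left.trans inf_le_left) (inf_le_right.trans inf_le_right)
      · exact le_inf (le_inf inf_le_left (inf_le_right.trans (hI (Fin.castSucc_le_succ q.2))))
          (le_inf (inf_le_left.trans (hJ (Fin.castSucc_le_succ q.1))) inf_le_right)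
    rw [e4] at e3
    have h1 : d ((q.1 : ℕ) + 1) (q.2 : ℕ) =
        (Module.finrank K ↥(J q.1.succ ⊓ I q.2.castSucc) : ℤ) := by
      rw [hd _ _ q.1.isLt (le_of_lt q.2.isLt)]; rfl
    have h2 : d (q.1 : ℕ) (q.2 : ℕ) =
        (Module.finrank K ↥(J q.1.castSucc ⊓ I q.2.castSucc) : ℤ) := by
      rw [hd _ _ (le_of_lt q.1.isLt) (le_of_lt q.2.isLt)]; rfl
    have h3 : d ((q.1 : ℕ) + 1) ((q.2 : ℕ) + 1) =
        (Module.finrank K ↥(J q.1.succ ⊓ I q.2.succ) : ℤ) := by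
      rw [hd _ _ q.1.isLt q.2.isLt]; rfl
    have h4 : d (q.1 : ℕ) ((q.2 : ℕ) + 1) =
        (Module.finrank K ↥(J q.1.castSucc ⊓ I q.2.succ) : ℤ) := by
      rw [hd _ _ (le_of_lt q.1.isLt) q.2.isLt]; rfl
    rw [h1, h2, h3, h4]
    omega
  have hdom : (Module.finrank K ((q : Fin m × Fin n) →
      (↥(J q.1.succ ⊓ I q.2.castSucc) ⧸
        (J q.1.castSucc ⊓ I q.2.castSucc ⊔ J q.1.succ ⊓ I q.2.succ).comap
          (J q.1.succ ⊓ I q.2.castSucc).subtype)) : ℤ) =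
      d m 0 - d 0 0 - d m n + d 0 n := by
    rw [Module.finrank_pi_fintype K]
    push_cast
    have hgrouped : ∀ q : Fin m × Fin n, q ∈ (Finset.univ : Finset (Fin m × Fin n)) →
        (Module.finrank K
        (↥(J q.1.succ ⊓ I q.2.castSucc) ⧸
          (J q.1.castSucc ⊓ I q.2.castSucc ⊔ J q.1.succ ⊓ I q.2.succ).comap
            (J q.1.succ ⊓ I q.2.castSucc).subtype) : ℤ) =
        ((d ((q.1 : ℕ) + 1) (q.2 : ℕ) - d ((q.1 : ℕ) + 1) ((q.2 : ℕ) + 1))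
          - (d (q.1 : ℕ) (q.2 : ℕ) - d (q.1 : ℕ) ((q.2 : ℕ) + 1))) :=
      fun q _ => by rw [hδrank q]; ring
    rw [Finset.sum_congr rfl hgrouped, Fintype.sum_prod_type_right]
    rw [Fin.sum_univ_eq_sum_range (fun j => ∑ i : Fin m,
      (d ((i : ℕ) + 1) j - d ((i : ℕ) + 1) (j + 1) - (d (i : ℕ) j - d (i : ℕ) (j + 1)))) n]
    rw [Finset.sum_congr rfl (fun j (_ : j ∈ Finset.range n) =>
      Fin.sum_univ_eq_sum_range
        (fun i => d (i + 1) j - d (i + 1) (j + 1) - (d i j - d i (j + 1))) m)]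
    rw [Finset.sum_congr rfl (fun j (_ : j ∈ Finset.range n) =>
      Finset.sum_range_sub (fun i => d i j - d i (j + 1)) m)]
    rw [Finset.sum_sub_distrib, Finset.sum_range_sub' (fun j => d m j) n,
      Finset.sum_range_sub' (fun j => d 0 j) n]
    ring
  have hcod : (Module.finrank K (↥(J (Fin.last m) ⊓ I 0) ⧸ Qtop) : ℤ) =
      d m 0 - d 0 0 - d m n + d 0 n := by
    haveI := hfd 0 0
    haveI := hfd (Fin.last m) (Fin.last n)
    have hST : (J 0 ⊓ I 0) ⊔ (J (Fin.last m) ⊓ I (Fin.last n)) ≤ J (Fin.last m) ⊓ I 0 :=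
      sup_le (inf_le_inf (hJ (Fin.zero_le _)) le_rfl)
        (inf_le_inf le_rfl (hI (Fin.zero_le _)))
    have e1 := Submodule.finrank_quotient_add_finrank Qtop
    have e2 : Module.finrank K ↥Qtop =
        Module.finrank K ↥((J 0 ⊓ I 0) ⊔ (J (Fin.last m) ⊓ I (Fin.last n))) := by
      rw [hQtopdef]
      exact (Submodule.comapSubtypeEquivOfLe hST).finrank_eq
    have e3 := Submodule.finrank_sup_add_finrank_inf_eq
      (J 0 ⊓ I 0) (J (Fin.last m) ⊓ I (Fin.last n))
    have e4 : (J 0 ⊓ I 0) ⊓ (J (Fin.last m) ⊓ I (Fin.last n)) = J 0 ⊓ I (Fin.last n) := by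
      apply le_antisymm
      · exact le_inf (inf_le_left.trans inf_le_left) (inf_le_right.trans inf_le_right)
      · exact le_inf (le_inf inf_le_left (inf_le_right.trans (hI (Fin.zero_le _))))
          (le_inf (inf_le_left.trans (hJ (Fin.zero_le _))) inf_le_right)
    rw [e4] at e3
    have em0 : (⟨0, by omega⟩ : Fin (m + 1)) = 0 := Fin.ext (by simp)
    have en0 : (⟨0, by omega⟩ : Fin (n + 1)) = 0 := Fin.ext (by simp)
    have h1 : d m 0 = (Module.finrank K ↥(J (Fin.last m) ⊓ I 0) : ℤ) := by
      rw [hd m 0 le_rfl (Nat.zero_le n), en0]; rfl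
    have h2 : d 0 0 = (Module.finrank K ↥(J 0 ⊓ I 0) : ℤ) := by
      rw [hd 0 0 (Nat.zero_le m) (Nat.zero_le n), em0, en0]
    have h3 : d m n = (Module.finrank K ↥(J (Fin.last m) ⊓ I (Fin.last n)) : ℤ) := by
      rw [hd m n le_rfl le_rfl]; rfl
    have h4 : d 0 n = (Module.finrank K ↥(J 0 ⊓ I (Fin.last n)) : ℤ) := by
      rw [hd 0 n (Nat.zero_le m) le_rfl, em0]; rfl
    rw [h1, h2, h3, h4]
    omega
  have hrank : Module.finrank K ((q : Fin m × Fin n) →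
      (↥(J q.1.succ ⊓ I q.2.castSucc) ⧸
        (J q.1.castSucc ⊓ I q.2.castSucc ⊔ J q.1.succ ⊓ I q.2.succ).comap
          (J q.1.succ ⊓ I q.2.castSucc).subtype)) =
      Module.finrank K (↥(J (Fin.last m) ⊓ I 0) ⧸ Qtop) := by
    have := hdom.trans hcod.symm
    exact_mod_cast this
  exact ⟨(LinearMap.injective_iff_surjective_of_finrank_eq_finrank hrank).mpr hsurj, hsurj⟩
end

section
/- Let e : M ≃ M be a K-linear automorphism and let F, F' : ℤ → Submodule K M be families of submodules with F' k ≤ F k for every k ∈ ℤ, such that the image of F k under e equals F (k+1) and the image of F' k under e equals F' (k+1) for every k. Then there exists a family of K-linear maps s_k : F k ⧸ F' k → F k, indexed by k ∈ ℤ, such that each s_k is a right inverse of the canonical projection F k → F k ⧸ F' k, and such that for every k and every x ∈ F k ⧸ F' k one has e (s_k x) = s_{k+1} (ē_k x), where ē_k : F k ⧸ F' k → F (k+1) ⧸ F' (k+1) is the K-linear isomorphism induced by e. -/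
private lemma aux_pow_map (K : Type*) [Field K] (M : Type*) [AddCommGroup M] [Module K M]
    (e : M ≃ₗ[K] M) (G : ℤ → Submodule K M)
    (hG : ∀ k, (G k).map (e : M →ₗ[K] M) = G (k + 1)) :
    ∀ k : ℤ, (G 0).map ((e ^ k : M ≃ₗ[K] M) : M →ₗ[K] M) = G k := by
  have hdown : ∀ k : ℤ, (G (k+1)).map (e.symm : M →ₗ[K] M) = G k := by
    intro k
    rw [← hG k, ← Submodule.map_comp]
    simp
  intro k
  induction k using Int.induction_on with
  | zero => simp
  | succ n ih =>
    rw [← hG n, ← ih, ← Submodule.map_comp]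
    congr 1
    ext x
    have : e ^ ((n : ℤ) + 1) = e * e ^ (n : ℤ) := by
      rw [add_comm, zpow_add, zpow_one]
    simp [this]
  | pred n ih =>
    have h : (-(n:ℤ) - 1) + 1 = -n := by ring
    rw [← hdown (-(n:ℤ)-1), h, ← ih, ← Submodule.map_comp]
    congr 1
    ext x
    have : e ^ (-(n:ℤ) - 1) = e⁻¹ * e ^ (-(n:ℤ)) := by
      rw [sub_eq_add_neg, add_comm, zpow_add, zpow_neg_one]
    simp [this]

/-- Existence of compatible splittings (Section 3 of the paper): given a linear
automorphism `e` of `M` and families `F' k ≤ F k` of submodules with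
`e (F k) = F (k+1)` and `e (F' k) = F' (k+1)`, there are linear right inverses
`s_k : F k ⧸ F' k → F k` of the canonical projections satisfying
`e ∘ s_k = s_{k+1} ∘ ē_k`, where `ē_k : F k ⧸ F' k → F (k+1) ⧸ F' (k+1)` is the
isomorphism induced by `e` (note that `ē_k (mk y) = mk ⟨e y, _⟩`). -/
theorem stmt12 (K : Type*) [Field K] (M : Type*) [AddCommGroup M] [Module K M]
    (e : M ≃ₗ[K] M) (F F' : ℤ → Submodule K M) (hFF' : ∀ k, F' k ≤ F k)
    (hF : ∀ k, (F k).map (e : M →ₗ[K] M) = F (k + 1))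
    (hF' : ∀ k, (F' k).map (e : M →ₗ[K] M) = F' (k + 1)) :
    ∃ s : (k : ℤ) → (↥(F k) ⧸ (F' k).comap (F k).subtype) →ₗ[K] ↥(F k),
      (∀ (k : ℤ) (x : ↥(F k) ⧸ (F' k).comap (F k).subtype),
        ((F' k).comap (F k).subtype).mkQ (s k x) = x) ∧
      (∀ (k : ℤ) (y : ↥(F k)),
        e ((s k (Submodule.Quotient.mk y) : ↥(F k)) : M) =
          ((s (k + 1)
              (Submodule.Quotient.mk
                (⟨e (y : M), by
                  rw [← hF k]; exact Submodule.mem_map_of_mem y.2⟩ : ↥(F (k + 1)))) :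
            ↥(F (k + 1))) : M)) := by
  classical
  set Q : ∀ k : ℤ, Submodule K ↥(F k) := fun k => (F' k).comap (F k).subtype with hQ
  have hpF := aux_pow_map K M e F hF
  have hpF' := aux_pow_map K M e F' hF'
  -- the equivalence F 0 ≃ F k
  let E : (k : ℤ) → ↥(F 0) ≃ₗ[K] ↥(F k) := fun k =>
    ((e ^ k).submoduleMap (F 0)).trans (LinearEquiv.ofEq _ _ (hpF k))
  have hE : ∀ (k : ℤ) (x : ↥(F 0)), ((E k x : ↥(F k)) : M) = (e ^ k) (x : M) := by
    intro k x; rfl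
  have hEQ : ∀ k : ℤ, (Q 0).map (E k : ↥(F 0) →ₗ[K] ↥(F k)) = Q k := by
    intro k
    ext x
    constructor
    · rintro ⟨y, hy, rfl⟩
      have : ((E k y : ↥(F k)) : M) ∈ F' k := by
        rw [← hpF' k, hE]
        exact ⟨y, hy, rfl⟩
      exact this
    · intro hx
      refine ⟨(E k).symm x, ?_, by simp⟩
      have hx' : (x : M) ∈ (F' 0).map ((e ^ k : M ≃ₗ[K] M) : M →ₗ[K] M) := by
        rw [hpF' k]; exact hx
      obtain ⟨z, hz, hzx⟩ := hx'
      have hxv : (((E k).symm x : ↥(F 0)) : M) = z := by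
        have : (E k ((E k).symm x) : M) = (e ^ k) z := by
          rw [LinearEquiv.apply_symm_apply]; exact hzx.symm
        rw [hE] at this
        exact (e ^ k).injective this
      show (((E k).symm x : ↥(F 0)) : M) ∈ F' 0
      rw [hxv]; exact hz
  let qE : (k : ℤ) → (↥(F 0) ⧸ Q 0) ≃ₗ[K] (↥(F k) ⧸ Q k) := fun k =>
    Submodule.Quotient.equiv (Q 0) (Q k) (E k) (hEQ k)
  have hqE : ∀ (k : ℤ) (y : ↥(F 0)),
      qE k (Submodule.Quotient.mk y) = Submodule.Quotient.mk (E k y) := by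
    intro k y; rfl
  have hqEs : ∀ (k : ℤ) (y : ↥(F k)),
      (qE k).symm (Submodule.Quotient.mk y) = Submodule.Quotient.mk ((E k).symm y) := by
    intro k y
    apply (qE k).injective
    rw [LinearEquiv.apply_symm_apply, hqE, LinearEquiv.apply_symm_apply]
  -- a splitting at level 0
  obtain ⟨s0, hs0⟩ := Module.projective_lifting_property (Q 0).mkQ LinearMap.id
    (Submodule.mkQ_surjective (Q 0))
  have hs0' : ∀ x, (Q 0).mkQ (s0 x) = x := fun x => congrFun (congrArg DFunLike.coe hs0) x
  refine ⟨fun k => (E k : ↥(F 0) →ₗ[K] ↥(F k)) ∘ₗ s0 ∘ₗ ((qE k).symm : _ →ₗ[K] _), ?_, ?_⟩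
  · intro k x
    show (Q k).mkQ (E k (s0 ((qE k).symm x))) = x
    induction x using Submodule.Quotient.induction_on with
    | _ y =>
      rw [hqEs]
      have : (Q k).mkQ (E k (s0 (Submodule.Quotient.mk ((E k).symm y)))) =
          qE k ((Q 0).mkQ (s0 (Submodule.Quotient.mk ((E k).symm y)))) := rfl
      rw [this, hs0', ← hqEs, LinearEquiv.apply_symm_apply]
  · intro k y
    show e ((E k (s0 ((qE k).symm (Submodule.Quotient.mk y))) : ↥(F k)) : M) =
      ((E (k+1) (s0 ((qE (k+1)).symm (Submodule.Quotient.mk _))) : ↥(F (k+1))) : M)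
    rw [hqEs, hqEs]
    have harg : ((E k).symm y : ↥(F 0)) =
        (E (k+1)).symm (⟨e (y : M), by rw [← hF k]; exact Submodule.mem_map_of_mem y.2⟩ :
          ↥(F (k+1))) := by
      apply (E (k+1)).injective
      rw [LinearEquiv.apply_symm_apply]
      apply Subtype.ext
      rw [hE]
      show (e ^ (k+1)) (((E k).symm y : ↥(F 0)) : M) = e (y : M)
      have hz : e ^ (k+1) = e * e ^ k := by rw [add_comm, zpow_add, zpow_one]
      have hy : (e ^ k) (((E k).symm y : ↥(F 0)) : M) = (y : M) := by
        rw [← hE, LinearEquiv.apply_symm_apply]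
      rw [hz]
      show e ((e ^ k) (((E k).symm y : ↥(F 0)) : M)) = e (y : M)
      rw [hy]
    rw [← harg, hE, hE]
    have hz : e ^ (k+1) = e * e ^ k := by rw [add_comm, zpow_add, zpow_one]
    rw [hz]
    rfl
end

section
/- Let J : ℝ → Submodule K M be monotone and I : ℝ → Submodule K M antitone (as K-submodules of M) such that for every a the image of J a under multiplication by t equals J (a + 2π), and for every b the image of I b under multiplication by t equals I (b + 2π). Set F(a,b) := J a ⊓ I b and F'(a,b) := (⨆_{a' < a} (J a' ⊓ I b)) ⊔ (⨆_{b' > b} (J a ⊓ I b')). Then for all a, b ∈ ℝ the K-vector spaces F(a,b)⧸F'(a,b) and F(a+2π, b+2π)⧸F'(a+2π, b+2π) are isomorphic; in particular, if one of them is finite dimensional then so is the other and their K-dimensions are equal. -/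
/-- The 2π-periodicity `δ^f̃_r(a,b) = δ^f̃_r(a+2π, b+2π)` (formula (E4) of the paper).
With `F(a,b) := J a ⊓ I b` and
`F'(a,b) := (⨆_{a' < a} J a' ⊓ I b) ⊔ (⨆_{b' > b} J a ⊓ I b')`, where `J` is monotone,
`I` antitone, `t • (J a) = J (a+2π)` and `t • (I b) = I (b+2π)`, the quotients
`F(a,b)⧸F'(a,b)` and `F(a+2π,b+2π)⧸F'(a+2π,b+2π)` are isomorphic `K`-vector spaces;
in particular one is finite dimensional iff the other is, and their dimensions agree. -/
theorem stmt15 (K : Type*) [Field K] (M : Type*) [AddCommGroup M]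
    [Module K M] [Module (LaurentPolynomial K) M]
    [IsScalarTower K (LaurentPolynomial K) M]
    (J I : ℝ → Submodule K M) (hJ : Monotone J) (hI : Antitone I)
    (htJ : ∀ a : ℝ, (J a).map (tMul K M) = J (a + 2 * Real.pi))
    (htI : ∀ b : ℝ, (I b).map (tMul K M) = I (b + 2 * Real.pi)) :
    ∀ a b : ℝ,
      Nonempty
        ((↥(J a ⊓ I b) ⧸
            (((⨆ a' < a, J a' ⊓ I b) ⊔ (⨆ b' > b, J a ⊓ I b')).comap
              (J a ⊓ I b).subtype)) ≃ₗ[K]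
          (↥(J (a + 2 * Real.pi) ⊓ I (b + 2 * Real.pi)) ⧸
            (((⨆ a' < a + 2 * Real.pi, J a' ⊓ I (b + 2 * Real.pi)) ⊔
                (⨆ b' > b + 2 * Real.pi, J (a + 2 * Real.pi) ⊓ I b')).comap
              (J (a + 2 * Real.pi) ⊓ I (b + 2 * Real.pi)).subtype))) ∧
      (FiniteDimensional K
          (↥(J a ⊓ I b) ⧸
            (((⨆ a' < a, J a' ⊓ I b) ⊔ (⨆ b' > b, J a ⊓ I b')).comap
              (J a ⊓ I b).subtype)) ↔
        FiniteDimensional K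
          (↥(J (a + 2 * Real.pi) ⊓ I (b + 2 * Real.pi)) ⧸
            (((⨆ a' < a + 2 * Real.pi, J a' ⊓ I (b + 2 * Real.pi)) ⊔
                (⨆ b' > b + 2 * Real.pi, J (a + 2 * Real.pi) ⊓ I b')).comap
              (J (a + 2 * Real.pi) ⊓ I (b + 2 * Real.pi)).subtype))) ∧
      Module.finrank K
          (↥(J a ⊓ I b) ⧸
            (((⨆ a' < a, J a' ⊓ I b) ⊔ (⨆ b' > b, J a ⊓ I b')).comap
              (J a ⊓ I b).subtype)) =
        Module.finrank K
          (↥(J (a + 2 * Real.pi) ⊓ I (b + 2 * Real.pi)) ⧸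
            (((⨆ a' < a + 2 * Real.pi, J a' ⊓ I (b + 2 * Real.pi)) ⊔
                (⨆ b' > b + 2 * Real.pi, J (a + 2 * Real.pi) ⊓ I b')).comap
              (J (a + 2 * Real.pi) ⊓ I (b + 2 * Real.pi)).subtype)) := by
  classical
  intro a b
  set R := LaurentPolynomial K
  -- the K-linear equivalence given by multiplication by t
  let e : M ≃ₗ[K] M := LinearEquiv.ofLinear (tMul K M)
    ((LinearMap.lsmul R M (LaurentPolynomial.T (-1))).restrictScalars K)
    (by ext m
        simp only [tMul, LinearMap.coe_comp, Function.comp_apply,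
          LinearMap.restrictScalars_apply, LinearMap.lsmul_apply, LinearMap.id_coe, id_eq]
        rw [smul_smul, ← LaurentPolynomial.T_add]
        norm_num)
    (by ext m
        simp only [tMul, LinearMap.coe_comp, Function.comp_apply,
          LinearMap.restrictScalars_apply, LinearMap.lsmul_apply, LinearMap.id_coe, id_eq]
        rw [smul_smul, ← LaurentPolynomial.T_add]
        norm_num)
  have he : (e : M →ₗ[K] M) = tMul K M := rfl
  set π := (2 : ℝ) * Real.pi
  set F := J a ⊓ I b with hFdef
  set F2 := J (a + π) ⊓ I (b + π) with hF2def
  set F' := (⨆ a' < a, J a' ⊓ I b) ⊔ (⨆ b' > b, J a ⊓ I b') with hF'def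
  set F2' := (⨆ a' < a + π, J a' ⊓ I (b + π)) ⊔ (⨆ b' > b + π, J (a + π) ⊓ I b')
    with hF2'def
  have hinf : ∀ p q : Submodule K M, (p ⊓ q).map (e : M →ₗ[K] M)
      = p.map (e : M →ₗ[K] M) ⊓ q.map (e : M →ₗ[K] M) :=
    fun p q => Submodule.map_inf _ e.injective
  have hmapF : F.map (e : M →ₗ[K] M) = F2 := by
    rw [hFdef, hinf, he, htJ, htI]
  have hmapF' : F'.map (e : M →ₗ[K] M) = F2' := by
    rw [hF'def, Submodule.map_sup, Submodule.map_iSup, Submodule.map_iSup, hF2'def]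
    congr 1
    · apply le_antisymm
      · refine iSup_le fun a' => ?_
        rw [Submodule.map_iSup]
        refine iSup_le fun h => ?_
        rw [hinf, he, htJ, htI]
        exact le_iSup₂ (f := fun a' (_ : a' < a + π) => J a' ⊓ I (b + π)) (a' + π)
          (by simpa [π] using h)
      · refine iSup₂_le fun a' h => ?_
        have := le_iSup₂ (f := fun x (_ : x < a) =>
          ((J x ⊓ I b).map (e : M →ₗ[K] M))) (a' - π) (by have hπ : π = 2 * Real.pi := rfl; simp only [hπ] at h ⊢; linarith)
        rw [hinf, he, htJ, htI, sub_add_cancel] at this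
        simpa [he] using this
    · apply le_antisymm
      · refine iSup_le fun b' => ?_
        rw [Submodule.map_iSup]
        refine iSup_le fun h => ?_
        rw [hinf, he, htJ, htI]
        exact le_iSup₂ (f := fun b' (_ : b' > b + π) => J (a + π) ⊓ I b') (b' + π)
          (by simpa [π] using h)
      · refine iSup₂_le fun b' h => ?_
        have := le_iSup₂ (f := fun x (_ : x > b) =>
          ((J a ⊓ I x).map (e : M →ₗ[K] M))) (b' - π) (by have hπ : π = 2 * Real.pi := rfl; simp only [hπ] at h ⊢; linarith)
        rw [hinf, he, htJ, htI, sub_add_cancel] at this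
        simpa [he] using this
  have hF'F : F' ≤ F := by
    rw [hF'def, hFdef]
    refine sup_le (iSup₂_le fun a' h => inf_le_inf (hJ h.le) le_rfl)
      (iSup₂_le fun b' h => inf_le_inf le_rfl (hI h.le))
  have hF2'F2 : F2' ≤ F2 := by
    rw [← hmapF, ← hmapF']
    exact Submodule.map_mono hF'F
  let eF : F ≃ₗ[K] F2 := e.ofSubmodules F F2 hmapF
  have hq : (F'.comap F.subtype).map (eF : F →ₗ[K] F2) = F2'.comap F2.subtype := by
    apply le_antisymm
    · rintro z ⟨w, hw, rfl⟩
      simp only [Submodule.mem_comap] at hw ⊢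
      have : (e : M →ₗ[K] M) (w : M) ∈ F'.map (e : M →ₗ[K] M) :=
        Submodule.mem_map_of_mem hw
      rw [hmapF'] at this
      simpa [eF] using this
    · rintro z hz
      simp only [Submodule.mem_comap, ← hmapF', Submodule.mem_map] at hz
      obtain ⟨m, hm, hmz⟩ := hz
      refine ⟨⟨m, hF'F hm⟩, by simpa using hm, ?_⟩
      apply Subtype.ext
      simpa [eF] using hmz
  exact ⟨⟨Submodule.Quotient.equiv _ _ eF hq⟩,
    ⟨fun h => (Submodule.Quotient.equiv _ _ eF hq).finiteDimensional,
     fun h => (Submodule.Quotient.equiv _ _ eF hq).symm.finiteDimensional⟩,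
    (Submodule.Quotient.equiv _ _ eF hq).finrank_eq⟩
end
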